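/- arXiv:2311.07522 — 6 statements merged into one kernel-verified Lean document; each statement's English description precedes it below -/
import Mathlib

section
/- For every integer n ≥ 2 and every matrix C in the hollow symmetric Monge polytope HM_n, there exists a unique family of nonnegative real numbers (λ_{a,b}), indexed by pairs of integers a,b ≥ 1 with a+b ≤ n, such that Σ λ_{a,b} = 1 and C = Σ_{a+b≤n} λ_{a,b} · (1/(2ab)) · NESW(a×b). -/
open Finset

/-- The Monge property for an `n × n` real matrix (indices are 0-based). -/
def IsMonge {n : ℕ} (C : Matrix (Fin n) (Fin n) ℝ) : Prop :=
  ∀ i I j J : Fin n, i < I → j < J → C i j + C I J ≤ C i J + C I j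

/-- The hollow symmetric Monge polytope: symmetric matrices with zero diagonal,
nonnegative entries summing to 1, and the Monge property. -/
def HM (n : ℕ) : Set (Matrix (Fin n) (Fin n) ℝ) :=
  {C | C.IsSymm ∧ (∀ i, C i i = 0) ∧ (∀ i j, 0 ≤ C i j) ∧
    (∑ i, ∑ j, C i j) = 1 ∧ IsMonge C}

/-- `NESW n a b` is the `n × n` 0/1 matrix whose (1-based) `(k, l)` entry is 1 iff
`(k ≤ a ∧ l > n - b) ∨ (k > n - b ∧ l ≤ a)`. -/
def NESW (n a b : ℕ) : Matrix (Fin n) (Fin n) ℝ :=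
  Matrix.of fun k l =>
    if (k.val + 1 ≤ a ∧ n - b < l.val + 1) ∨ (n - b < k.val + 1 ∧ l.val + 1 ≤ a) then 1 else 0

/-- The index set of pairs `(a, b)` with `a, b ≥ 1` and `a + b ≤ n`. -/
def idx (n : ℕ) : Finset (ℕ × ℕ) :=
  (Finset.range (n + 1) ×ˢ Finset.range (n + 1)).filter
    fun ab => 1 ≤ ab.1 ∧ 1 ≤ ab.2 ∧ ab.1 + ab.2 ≤ n

/-!
In 0-based indices the upper triangle of `NESW (a × b)` is the rectangle `{k < a, l ≥ n - b}`,
so the upper triangle of a combination `∑ w_{ab} NESW (a × b)` is a two-dimensional cumulative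
sum of the weights. Cumulative sums are inverted by mixed second differences, and a symmetric
hollow matrix is determined by its upper triangle; hence the weights of `C` are forced to be
`C_{a-1,n-b} + C_{a,n-b-1} - C_{a,n-b} - C_{a-1,n-b-1}` (entries on or below the diagonal read
as `0`). These are nonnegative by the Monge property, or by `C ≥ 0` when `a + b = n`, and the
coefficients `λ_{ab} = 2ab · w_{ab}` sum to `1` because `NESW (a × b)` has `2ab` ones.
-/

lemma mem_idx_iff {n : ℕ} {ab : ℕ × ℕ} :
    ab ∈ idx n ↔ 1 ≤ ab.1 ∧ 1 ≤ ab.2 ∧ ab.1 + ab.2 ≤ n := by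
  simp only [idx, mem_filter, mem_product, mem_range]
  omega

section Triangle

variable {M : Type*} [AddCommGroup M]

def triangleSum (f : ℕ → ℕ → M) (k l : ℕ) : M :=
  ∑ a ∈ Ico k l, ∑ c ∈ Ico a l, f a c

def mixedDiff (g : ℕ → ℕ → M) (a c : ℕ) : M :=
  g a (c + 1) - g (a + 1) (c + 1) - g a c + g (a + 1) c

lemma triangleSum_of_le (f : ℕ → ℕ → M) {k l : ℕ} (h : l ≤ k) : triangleSum f k l = 0 := by
  rw [triangleSum, Ico_eq_empty_of_le h, sum_empty]

lemma triangleSum_eq_add (f : ℕ → ℕ → M) {a l : ℕ} (h : a ≤ l) :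
    triangleSum f a l = ∑ c ∈ Ico a l, f a c + triangleSum f (a + 1) l := by
  rcases h.eq_or_lt with rfl | h
  · simp [triangleSum]
  · exact sum_eq_sum_Ico_succ_bot h _

theorem mixedDiff_triangleSum (f : ℕ → ℕ → M) {a c : ℕ} (h : a ≤ c) :
    mixedDiff (triangleSum f) a c = f a c := by
  rw [mixedDiff, triangleSum_eq_add f h, triangleSum_eq_add f (h.trans c.le_succ),
    sum_Ico_succ_top h]
  abel

theorem triangleSum_mixedDiff {g : ℕ → ℕ → M} (hg : ∀ k l, l ≤ k → g k l = 0) (k l : ℕ) :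
    triangleSum (mixedDiff g) k l = g k l := by
  rcases le_or_gt l k with h | h
  · rw [triangleSum_of_le _ h, hg k l h]
  have row : ∀ a ∈ Ico k l, ∑ c ∈ Ico a l, mixedDiff g a c = -(g (a + 1) l - g a l) := by
    intro a ha
    have hal : a ≤ l := (mem_Ico.1 ha).2.le
    calc ∑ c ∈ Ico a l, mixedDiff g a c
        = ∑ c ∈ Ico a l, ((g a (c + 1) - g a c) - (g (a + 1) (c + 1) - g (a + 1) c)) :=
          sum_congr rfl fun c _ => by rw [mixedDiff]; abel
      _ = (g a l - g a a) - (g (a + 1) l - g (a + 1) a) := by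
          rw [sum_sub_distrib, sum_Ico_sub (g a) hal, sum_Ico_sub (g (a + 1)) hal]
      _ = -(g (a + 1) l - g a l) := by
          rw [hg a a le_rfl, hg (a + 1) a a.le_succ]
          abel
  rw [triangleSum, sum_congr rfl row, sum_neg_distrib, sum_Ico_sub (g · l) h.le, hg l l le_rfl]
  abel

end Triangle

section UpperPart

variable {α : Type*} [Zero α] {n : ℕ}

def upperPart (A : Matrix (Fin n) (Fin n) α) (k l : ℕ) : α :=
  if h : k < l ∧ l < n then A ⟨k, h.1.trans h.2⟩ ⟨l, h.2⟩ else 0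

lemma upperPart_of_le (A : Matrix (Fin n) (Fin n) α) {k l : ℕ} (h : l ≤ k) :
    upperPart A k l = 0 :=
  dif_neg fun h' => (h.trans_lt h'.1).false

lemma upperPart_apply {A : Matrix (Fin n) (Fin n) α} (hA : ∀ i, A i i = 0) {k l : ℕ}
    (hkl : k ≤ l) (hl : l < n) : upperPart A k l = A ⟨k, hkl.trans_lt hl⟩ ⟨l, hl⟩ := by
  rcases hkl.eq_or_lt with rfl | h
  · rw [upperPart_of_le A le_rfl, hA]
  · exact dif_pos ⟨h, hl⟩

lemma Matrix.IsSymm.ext_of_lt {A B : Matrix (Fin n) (Fin n) α} (hA : A.IsSymm) (hB : B.IsSymm)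
    (hA₀ : ∀ i, A i i = 0) (hB₀ : ∀ i, B i i = 0) (h : ∀ i j, i < j → A i j = B i j) :
    A = B := by
  ext i j
  rcases lt_trichotomy i j with hij | rfl | hij
  · exact h i j hij
  · rw [hA₀, hB₀]
  · rw [← hA.apply, ← hB.apply, h j i hij]

end UpperPart

lemma mixedDiff_upperPart_nonneg {n : ℕ} {C : Matrix (Fin n) (Fin n) ℝ} (hC : C ∈ HM n)
    {a c : ℕ} (hac : a ≤ c) (hc : c + 1 < n) : 0 ≤ mixedDiff (upperPart C) a c := by
  obtain ⟨-, hdiag, hpos, -, hmonge⟩ := hC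
  rcases hac.eq_or_lt with rfl | hac
  · rw [mixedDiff, upperPart_apply hdiag a.le_succ hc, upperPart_of_le C le_rfl,
      upperPart_of_le C le_rfl, upperPart_of_le C a.le_succ]
    simpa using hpos _ _
  · rw [mixedDiff, upperPart_apply hdiag (by omega) hc, upperPart_apply hdiag (by omega) hc,
      upperPart_apply hdiag (by omega) (by omega), upperPart_apply hdiag (by omega) (by omega)]
    have := hmonge ⟨a, by omega⟩ ⟨a + 1, by omega⟩ ⟨c, by omega⟩ ⟨c + 1, by omega⟩
      (Fin.mk_lt_mk.2 a.lt_succ_self) (Fin.mk_lt_mk.2 c.lt_succ_self)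
    linarith

section NESW

variable {n a b : ℕ}

lemma NESW_isSymm : (NESW n a b).IsSymm :=
  Matrix.IsSymm.ext fun i j => by
    simp only [NESW, Matrix.of_apply]
    exact if_congr (by tauto) rfl rfl

lemma NESW_apply_self (hab : a + b ≤ n) (i : Fin n) : NESW n a b i i = 0 :=
  if_neg (by omega)

lemma NESW_apply_of_lt (hab : a + b ≤ n) {i j : Fin n} (hij : i < j) :
    NESW n a b i j = if (i : ℕ) < a ∧ n - b ≤ j then 1 else 0 := by
  have : (i : ℕ) < j := hij
  simp only [NESW, Matrix.of_apply]
  exact if_congr (by omega) rfl rfl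

lemma Fin.sum_boole_val_lt {m : ℕ} (hm : m ≤ n) :
    ∑ i : Fin n, (if (i : ℕ) < m then (1 : ℝ) else 0) = m := by
  rw [sum_boole, Fin.card_filter_val_lt, min_eq_right hm]

lemma sum_NESW (hab : a + b ≤ n) : ∑ i, ∑ j, NESW n a b i j = 2 * a * b := by
  have hrev : ∑ i : Fin n, (if n - b ≤ (i : ℕ) then (1 : ℝ) else 0) = b := by
    rw [← Fin.sum_boole_val_lt (n := n) (m := b) (by omega)]
    refine Fintype.sum_equiv Fin.revPerm _ _ fun i => ?_
    simp only [Fin.revPerm_apply, Fin.val_rev]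
    exact if_congr (by omega) rfl rfl
  have hsplit : ∀ i j : Fin n, NESW n a b i j =
      (if (i : ℕ) < a then 1 else 0) * (if n - b ≤ (j : ℕ) then 1 else 0) +
        (if n - b ≤ (i : ℕ) then 1 else 0) * (if (j : ℕ) < a then 1 else 0) := by
    intro i j
    simp only [NESW, Matrix.of_apply]
    split_ifs <;> first | (exfalso; omega) | norm_num
  simp only [hsplit, sum_add_distrib, ← mul_sum, ← sum_mul, hrev,
    Fin.sum_boole_val_lt (n := n) (show a ≤ n by omega)]
  ring

end NESW

/-- With 0-based indices, the upper-triangular ones of `NESW n a b` are the `(k, l)` with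
`k ≤ a - 1 ≤ n - b - 1 < l`; `(a, b) ↦ (a - 1, n - b - 1)` is the change of coordinates. -/
lemma sum_idx_ite_eq_triangleSum {M : Type*} [AddCommGroup M] {n k l : ℕ} (F : ℕ → ℕ → M)
    (hl : l < n) :
    ∑ p ∈ idx n, (if k < p.1 ∧ n - p.2 ≤ l then F (p.1 - 1) (n - p.2 - 1) else 0) =
      triangleSum F k l := by
  rw [← sum_filter, triangleSum, sum_sigma']
  refine sum_nbij' (fun p => ⟨p.1 - 1, n - p.2 - 1⟩) (fun x => (x.1 + 1, n - 1 - x.2))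
    ?_ ?_ ?_ ?_ fun _ _ => rfl <;>
  simp only [mem_filter, mem_idx_iff, mem_sigma, mem_Ico, Prod.forall, Sigma.forall,
    Prod.mk.injEq, Sigma.mk.inj_iff, heq_eq_eq] <;>
  omega

def neswComb (n : ℕ) (w : ℕ × ℕ → ℝ) : Matrix (Fin n) (Fin n) ℝ :=
  ∑ p ∈ idx n, w p • NESW n p.1 p.2

section NeswComb

variable {n : ℕ} {w : ℕ × ℕ → ℝ}

lemma neswComb_isSymm : (neswComb n w).IsSymm :=
  Matrix.IsSymm.ext fun i j => by
    simp only [neswComb, Matrix.sum_apply, Matrix.smul_apply, NESW_isSymm.apply]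

lemma neswComb_apply_self (i : Fin n) : neswComb n w i i = 0 := by
  rw [neswComb, Matrix.sum_apply]
  exact sum_eq_zero fun p hp => by
    rw [Matrix.smul_apply, NESW_apply_self (mem_idx_iff.1 hp).2.2, smul_zero]

lemma neswComb_apply_of_lt {F : ℕ → ℕ → ℝ} (hw : ∀ p ∈ idx n, w p = F (p.1 - 1) (n - p.2 - 1))
    {i j : Fin n} (hij : i < j) : neswComb n w i j = triangleSum F i j := by
  rw [neswComb, Matrix.sum_apply, ← sum_idx_ite_eq_triangleSum F j.isLt]
  refine sum_congr rfl fun p hp => ?_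
  rw [Matrix.smul_apply, NESW_apply_of_lt (mem_idx_iff.1 hp).2.2 hij, hw p hp, smul_eq_mul,
    mul_ite, mul_one, mul_zero]

lemma sum_neswComb : ∑ i, ∑ j, neswComb n w i j = ∑ p ∈ idx n, w p * (2 * p.1 * p.2) := by
  calc ∑ i, ∑ j, neswComb n w i j = ∑ p ∈ idx n, w p * ∑ i, ∑ j, NESW n p.1 p.2 i j := by
        simp only [neswComb, Matrix.sum_apply, Matrix.smul_apply, smul_eq_mul, mul_sum]
        exact ((sum_comm).trans (sum_congr rfl fun _ _ => sum_comm)).symm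
    _ = ∑ p ∈ idx n, w p * (2 * p.1 * p.2) :=
        sum_congr rfl fun p hp => by rw [sum_NESW (mem_idx_iff.1 hp).2.2]

end NeswComb

theorem eq_neswComb_iff {n : ℕ} {C : Matrix (Fin n) (Fin n) ℝ} (hC : C.IsSymm)
    (hC₀ : ∀ i, C i i = 0) (w : ℕ × ℕ → ℝ) :
    C = neswComb n w ↔ ∀ p ∈ idx n, w p = mixedDiff (upperPart C) (p.1 - 1) (n - p.2 - 1) := by
  constructor
  · rintro rfl p hp
    set F : ℕ → ℕ → ℝ := fun a c => w (a + 1, n - 1 - c)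
    have hw : ∀ p ∈ idx n, w p = F (p.1 - 1) (n - p.2 - 1) := fun p hp => by
      obtain ⟨h₁, h₂, h₃⟩ := mem_idx_iff.1 hp
      exact congrArg w (Prod.ext (by omega) (by omega))
    have hupper : ∀ k l, l < n → upperPart (neswComb n w) k l = triangleSum F k l := by
      intro k l hl
      rcases lt_or_ge k l with hkl | hkl
      · rw [upperPart, dif_pos ⟨hkl, hl⟩, neswComb_apply_of_lt hw (Fin.mk_lt_mk.2 hkl)]
      · rw [upperPart_of_le _ hkl, triangleSum_of_le _ hkl]
    obtain ⟨h₁, h₂, h₃⟩ := mem_idx_iff.1 hp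
    have := mixedDiff_triangleSum F (show p.1 - 1 ≤ n - p.2 - 1 by omega)
    rw [mixedDiff] at this ⊢
    rw [hupper _ _ (by omega), hupper _ _ (by omega), hupper _ _ (by omega),
      hupper _ _ (by omega), this, hw p hp]
  · intro hw
    refine hC.ext_of_lt neswComb_isSymm hC₀ neswComb_apply_self fun i j hij => ?_
    rw [neswComb_apply_of_lt hw hij, triangleSum_mixedDiff (fun k l => upperPart_of_le C),
      upperPart, dif_pos ⟨hij, j.isLt⟩]

section Normalized

variable {n : ℕ} (lam : ℕ × ℕ → ℝ)

lemma sum_smul_NESW_eq_neswComb :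
    ∑ ab ∈ idx n, lam ab • ((1 / (2 * (ab.1 : ℝ) * (ab.2 : ℝ))) • NESW n ab.1 ab.2) =
      neswComb n fun p => lam p / (2 * p.1 * p.2) :=
  sum_congr rfl fun _ _ => by rw [smul_smul, mul_one_div]

lemma two_mul_fst_mul_snd_ne_zero {p : ℕ × ℕ} (hp : p ∈ idx n) : (2 * p.1 * p.2 : ℝ) ≠ 0 := by
  obtain ⟨h₁, h₂, -⟩ := mem_idx_iff.1 hp
  positivity

lemma sum_entries_sum_smul_NESW :
    ∑ i, ∑ j, (∑ ab ∈ idx n, lam ab • ((1 / (2 * (ab.1 : ℝ) * (ab.2 : ℝ))) •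
      NESW n ab.1 ab.2)) i j = ∑ ab ∈ idx n, lam ab := by
  rw [sum_smul_NESW_eq_neswComb, sum_neswComb]
  exact sum_congr rfl fun p hp => div_mul_cancel₀ _ (two_mul_fst_mul_snd_ne_zero hp)

theorem eq_sum_smul_NESW_iff {C : Matrix (Fin n) (Fin n) ℝ} (hC : C.IsSymm)
    (hC₀ : ∀ i, C i i = 0) :
    C = ∑ ab ∈ idx n, lam ab • ((1 / (2 * (ab.1 : ℝ) * (ab.2 : ℝ))) • NESW n ab.1 ab.2) ↔
      ∀ p ∈ idx n, lam p = 2 * p.1 * p.2 * mixedDiff (upperPart C) (p.1 - 1) (n - p.2 - 1) := by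
  rw [sum_smul_NESW_eq_neswComb, eq_neswComb_iff hC hC₀]
  refine forall₂_congr fun p hp => ?_
  rw [div_eq_iff (two_mul_fst_mul_snd_ne_zero hp), mul_comm]

end Normalized

theorem hm_unique_convex_combination_general (n : ℕ)
    (C : Matrix (Fin n) (Fin n) ℝ) (hC : C ∈ HM n) :
    ∃! lam : ℕ × ℕ → ℝ,
      (∀ ab, 0 ≤ lam ab) ∧ (∀ ab ∉ idx n, lam ab = 0) ∧
      (∑ ab ∈ idx n, lam ab) = 1 ∧
      C = ∑ ab ∈ idx n,
        lam ab • ((1 / (2 * (ab.1 : ℝ) * (ab.2 : ℝ))) • NESW n ab.1 ab.2) := by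
  obtain ⟨hsymm, hdiag, -, hsum, -⟩ := id hC
  let lam₀ : ℕ × ℕ → ℝ := fun p =>
    if p ∈ idx n then 2 * p.1 * p.2 * mixedDiff (upperPart C) (p.1 - 1) (n - p.2 - 1) else 0
  have hrep := (eq_sum_smul_NESW_iff lam₀ hsymm hdiag).2 fun p hp => if_pos hp
  refine ⟨lam₀, ⟨fun p => ?_, fun p hp => if_neg hp, ?_, hrep⟩, ?_⟩
  · by_cases hp : p ∈ idx n
    · obtain ⟨h₁, h₂, h₃⟩ := mem_idx_iff.1 hp
      exact (if_pos hp).trans_ge <|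
        mul_nonneg (by positivity) (mixedDiff_upperPart_nonneg hC (by omega) (by omega))
    · exact (if_neg hp).ge
  · rw [← sum_entries_sum_smul_NESW lam₀, ← hrep, hsum]
  · rintro lam ⟨-, hsupp, -, hlam⟩
    funext p
    by_cases hp : p ∈ idx n
    · exact ((eq_sum_smul_NESW_iff lam hsymm hdiag).1 hlam p hp).trans (if_pos hp).symm
    · exact (hsupp p hp).trans (if_neg hp).symm

/-- Every matrix in the hollow symmetric Monge polytope is a *unique* convex combination
of the matrices `(1/(2ab)) • NESW (a × b)` for `a, b ≥ 1` with `a + b ≤ n`. -/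
theorem hm_unique_convex_combination (n : ℕ) (hn : 2 ≤ n)
    (C : Matrix (Fin n) (Fin n) ℝ) (hC : C ∈ HM n) :
    ∃! lam : ℕ × ℕ → ℝ,
      (∀ ab, 0 ≤ lam ab) ∧ (∀ ab ∉ idx n, lam ab = 0) ∧
      (∑ ab ∈ idx n, lam ab) = 1 ∧
      C = ∑ ab ∈ idx n,
        lam ab • ((1 / (2 * (ab.1 : ℝ) * (ab.2 : ℝ))) • NESW n ab.1 ab.2) :=
  hm_unique_convex_combination_general n C hC
end

section
/- For every integer n ≥ 2 and every matrix C in the symmetric Monge polytope SM_n, there exist unique nonnegative real numbers (λ_{a,b}), indexed by pairs a,b ≥ 1 with a+b ≤ n, and (λ_i) for 1 ≤ i ≤ n, with total sum 1, such that C = Σ_{a+b≤n} λ_{a,b} · (1/(2ab)) · NESW(a×b) + Σ_{i=1}^n λ_i · (1/(2n)) · HV(i). -/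
/-!
Write `Δ p q C = C p (q+1) + C (p+1) q - C p q - C (p+1) (q+1)` for the mixed second differences
(0-based indices); the Monge property says exactly that they are nonnegative. Every `HV i` has
vanishing mixed differences and `NESW (a × b)` only has them at its inner corners `(a-1, n-b-1)`
and `(n-b-1, a-1)`, while on the diagonal every `NESW` vanishes. So a combination determines its
coefficients: `λ i` from the diagonal entry `i - 1`, `λ (a, b)` from `Δ (a-1) (n-b-1)`.

Conversely, with these coefficients the `NESW` part of an entry `(k, l)`, `k ≤ l`, is the sum of
`Δ p q C` over the triangle `k ≤ p ≤ q < l`, diagonal terms weighted by `1/2`. As `Δ` of a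
symmetric matrix is symmetric, this is half the sum over the square `[k, l)²`, which telescopes to
`C k l - (C k k + C l l) / 2`; the `HV` part supplies `(C k k + C l l) / 2`. Comparing entry sums
gives total weight `1`.
-/

open Finset

/-- The symmetric Monge polytope: symmetric matrices with
nonnegative entries summing to 1, and the Monge property. -/
def SM (n : ℕ) : Set (Matrix (Fin n) (Fin n) ℝ) :=
  {C | C.IsSymm ∧ (∀ i j, 0 ≤ C i j) ∧ (∑ i, ∑ j, C i j) = 1 ∧ IsMonge C}

/-- `HV n i` is the `n × n` matrix whose (1-based) `(k, l)` entry is `[k = i] + [l = i]`. -/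
def HV (n i : ℕ) : Matrix (Fin n) (Fin n) ℝ :=
  Matrix.of fun k l =>
    (if k.val + 1 = i then 1 else 0) + (if l.val + 1 = i then 1 else 0)

namespace SymmetricMonge

variable {n : ℕ}

lemma mem_idx {ab : ℕ × ℕ} : ab ∈ idx n ↔ 1 ≤ ab.1 ∧ 1 ≤ ab.2 ∧ ab.1 + ab.2 ≤ n := by
  simp only [idx, mem_filter, mem_product, mem_range]
  omega

noncomputable def entry (n k l : ℕ) : Matrix (Fin n) (Fin n) ℝ →ₗ[ℝ] ℝ :=
  if h : k < n ∧ l < n then Matrix.entryLinearMap ℝ ℝ ⟨k, h.1⟩ ⟨l, h.2⟩ else 0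

lemma entry_apply {k l : ℕ} (hk : k < n) (hl : l < n) (M : Matrix (Fin n) (Fin n) ℝ) :
    entry n k l M = M ⟨k, hk⟩ ⟨l, hl⟩ := by
  simp [entry, hk, hl]

lemma entry_comm {C : Matrix (Fin n) (Fin n) ℝ} (hC : C.IsSymm) (k l : ℕ) :
    entry n k l C = entry n l k C := by
  by_cases h : k < n ∧ l < n
  · rw [entry_apply h.1 h.2, entry_apply h.2 h.1, hC.apply]
  · simp [entry, h, and_comm.mp.mt h]

noncomputable def mixedDiff (n p q : ℕ) : Matrix (Fin n) (Fin n) ℝ →ₗ[ℝ] ℝ :=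
  entry n p (q + 1) + entry n (p + 1) q - entry n p q - entry n (p + 1) (q + 1)

lemma mixedDiff_apply {p q : ℕ} (hp : p + 1 < n) (hq : q + 1 < n)
    (M : Matrix (Fin n) (Fin n) ℝ) :
    mixedDiff n p q M = M ⟨p, by omega⟩ ⟨q + 1, hq⟩ + M ⟨p + 1, hp⟩ ⟨q, by omega⟩
      - M ⟨p, by omega⟩ ⟨q, by omega⟩ - M ⟨p + 1, hp⟩ ⟨q + 1, hq⟩ := by
  simp only [mixedDiff, LinearMap.sub_apply, LinearMap.add_apply]
  rw [entry_apply (by omega) hq, entry_apply hp (by omega), entry_apply (by omega) (by omega),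
    entry_apply hp hq]

lemma mixedDiff_comm {C : Matrix (Fin n) (Fin n) ℝ} (hC : C.IsSymm) (p q : ℕ) :
    mixedDiff n p q C = mixedDiff n q p C := by
  simp only [mixedDiff, LinearMap.sub_apply, LinearMap.add_apply, entry_comm hC p,
    entry_comm hC (p + 1)]
  ring

lemma mixedDiff_nonneg {C : Matrix (Fin n) (Fin n) ℝ} (hC : IsMonge C) {p q : ℕ}
    (hp : p + 1 < n) (hq : q + 1 < n) : 0 ≤ mixedDiff n p q C := by
  have := hC ⟨p, by omega⟩ ⟨p + 1, hp⟩ ⟨q, by omega⟩ ⟨q + 1, hq⟩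
    (Fin.mk_lt_mk.mpr p.lt_succ_self) (Fin.mk_lt_mk.mpr q.lt_succ_self)
  rw [mixedDiff_apply hp hq]
  linarith

lemma sum_Ico_sum_Ico_mixed (F : ℕ → ℕ → ℝ) {k l : ℕ} (hkl : k ≤ l) :
    ∑ p ∈ Ico k l, ∑ q ∈ Ico k l, (F p (q + 1) + F (p + 1) q - F p q - F (p + 1) (q + 1)) =
      F k l + F l k - F k k - F l l := by
  set G : ℕ → ℝ := fun p => F p l - F p k
  calc _ = -∑ p ∈ Ico k l, (G (p + 1) - G p) := by
        rw [← sum_neg_distrib]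
        refine sum_congr rfl fun p _ => ?_
        calc _ = ∑ q ∈ Ico k l, ((F p (q + 1) - F (p + 1) (q + 1)) - (F p q - F (p + 1) q)) :=
              sum_congr rfl fun q _ => by ring
          _ = _ := by rw [sum_Ico_sub (fun q => F p q - F (p + 1) q) hkl]; ring
    _ = _ := by rw [sum_Ico_sub G hkl]; ring

lemma sum_ite_val_lt {a : ℕ} (ha : a ≤ n) :
    ∑ k : Fin n, (if (k : ℕ) < a then 1 else 0 : ℝ) = a := by
  rw [sum_boole, Fin.card_filter_val_lt, min_eq_right ha]

lemma sum_ite_le_val {b : ℕ} (hb : b ≤ n) :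
    ∑ k : Fin n, (if n - b ≤ (k : ℕ) then 1 else 0 : ℝ) = b := by
  have h : ∀ k : Fin n, (if n - b ≤ (k : ℕ) then 1 else 0 : ℝ) =
      1 - if (k : ℕ) < n - b then 1 else 0 := fun k => by split_ifs <;> norm_num <;> omega
  rw [sum_congr rfl fun k _ => h k, sum_sub_distrib, sum_ite_val_lt (Nat.sub_le n b)]
  simp [Nat.cast_sub hb]

lemma sum_ite_val_add_one_eq {i : ℕ} (hi : i ∈ Icc 1 n) :
    ∑ k : Fin n, (if (k : ℕ) + 1 = i then 1 else 0 : ℝ) = 1 := by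
  rw [mem_Icc] at hi
  have h : ∀ k : Fin n, (k : ℕ) + 1 = i ↔ k = ⟨i - 1, by omega⟩ := fun k => by
    simp only [Fin.ext_iff]; omega
  simp only [h, sum_ite_eq', mem_univ, if_true]

section NESW

variable {a b : ℕ}

lemma NESW_apply_of_le (hab : a + b ≤ n) {k l : Fin n} (hkl : k ≤ l) :
    NESW n a b k l = if (k : ℕ) < a ∧ n - b ≤ l then 1 else 0 := by
  rw [Fin.le_def] at hkl
  simp only [NESW, Matrix.of_apply]
  exact if_congr (by omega) rfl rfl

lemma NESW_apply_comm (k l : Fin n) : NESW n a b k l = NESW n a b l k := by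
  simp only [NESW, Matrix.of_apply]
  exact if_congr (by tauto) rfl rfl

lemma NESW_apply_self (hab : a + b ≤ n) (k : Fin n) : NESW n a b k k = 0 := by
  simp only [NESW, Matrix.of_apply]
  exact if_neg (by omega)

lemma sum_NESW (hab : a + b ≤ n) : ∑ k, ∑ l, NESW n a b k l = 2 * a * b := by
  have h : ∀ k l : Fin n, NESW n a b k l =
      (if (k : ℕ) < a then 1 else 0) * (if n - b ≤ (l : ℕ) then 1 else 0) +
        (if n - b ≤ (k : ℕ) then 1 else 0) * (if (l : ℕ) < a then 1 else 0) := fun k l => by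
    simp only [NESW, Matrix.of_apply]
    split_ifs <;> norm_num <;> omega
  simp only [h, sum_add_distrib, ← mul_sum, ← sum_mul, sum_ite_val_lt (by omega : a ≤ n),
    sum_ite_le_val (by omega : b ≤ n)]
  ring

lemma mixedDiff_NESW (hab : (a, b) ∈ idx n) {a' b' : ℕ} (hab' : (a', b') ∈ idx n) :
    mixedDiff n (a - 1) (n - b - 1) (NESW n a' b') =
      if (a', b') = (a, b) then (if a + b = n then 2 else 1) else 0 := by
  rw [mem_idx] at hab hab'
  rw [mixedDiff_apply (by omega) (by omega)]
  simp only [NESW, Matrix.of_apply, Prod.mk.injEq]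
  split_ifs <;> norm_num <;> omega

end NESW

lemma HV_apply_comm (i : ℕ) (k l : Fin n) : HV n i k l = HV n i l k := by
  simp only [HV, Matrix.of_apply, add_comm]

lemma HV_apply_self (i : ℕ) (k : Fin n) : HV n i k k = if (k : ℕ) + 1 = i then 2 else 0 := by
  simp only [HV, Matrix.of_apply]
  split_ifs <;> norm_num

lemma mixedDiff_HV (i : ℕ) {p q : ℕ} (hp : p + 1 < n) (hq : q + 1 < n) :
    mixedDiff n p q (HV n i) = 0 := by
  rw [mixedDiff_apply hp hq]
  simp only [HV, Matrix.of_apply]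
  ring

lemma sum_HV {i : ℕ} (hi : i ∈ Icc 1 n) : ∑ k, ∑ l, HV n i k l = 2 * n := by
  simp only [HV, Matrix.of_apply, sum_add_distrib, sum_const, card_univ, Fintype.card_fin,
    nsmul_eq_mul, ← mul_sum, sum_ite_val_add_one_eq hi]
  ring

noncomputable def triWeight (p q : ℕ) : ℝ :=
  if p < q then 1 else if p = q then 1 / 2 else 0

lemma triWeight_of_lt {p q : ℕ} (h : q < p) : triWeight p q = 0 := by
  simp only [triWeight, if_neg h.not_gt, if_neg h.ne']

lemma triWeight_add_triWeight (p q : ℕ) : triWeight p q + triWeight q p = 1 := by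
  unfold triWeight
  split_ifs <;> norm_num <;> omega

lemma sum_sum_triWeight_mul (s : Finset ℕ) {f : ℕ → ℕ → ℝ} (hf : ∀ p q, f p q = f q p) :
    ∑ p ∈ s, ∑ q ∈ s, triWeight p q * f p q = (∑ p ∈ s, ∑ q ∈ s, f p q) / 2 := by
  have hswap : ∑ p ∈ s, ∑ q ∈ s, triWeight q p * f p q =
      ∑ p ∈ s, ∑ q ∈ s, triWeight p q * f p q := by
    rw [sum_comm]
    simp only [hf]
  have hsplit : ∑ p ∈ s, ∑ q ∈ s, f p q =
      ∑ p ∈ s, ∑ q ∈ s, triWeight p q * f p q + ∑ p ∈ s, ∑ q ∈ s, triWeight q p * f p q := by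
    simp only [← sum_add_distrib, ← add_mul, triWeight_add_triWeight, one_mul]
  linarith

lemma sum_idx_eq_sum_Ico_sum_Ico {g : ℕ → ℕ → ℝ} (hg : ∀ p q, q < p → g p q = 0)
    {k l : ℕ} (hl : l < n) :
    ∑ ab ∈ idx n, (if k < ab.1 ∧ n - ab.2 ≤ l then g (ab.1 - 1) (n - ab.2 - 1) else 0) =
      ∑ p ∈ Ico k l, ∑ q ∈ Ico k l, g p q := by
  rw [← sum_filter, ← sum_product',
    ← sum_filter_of_ne (s := Ico k l ×ˢ Ico k l) (p := fun pq => pq.1 ≤ pq.2)]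
  · refine sum_nbij' (fun ab => (ab.1 - 1, n - ab.2 - 1)) (fun pq => (pq.1 + 1, n - 1 - pq.2))
      ?_ ?_ ?_ ?_ fun _ _ => rfl
    all_goals
      rintro ⟨a, b⟩ h
      simp only [mem_filter, mem_product, mem_Ico, mem_idx, Prod.mk.injEq] at h ⊢
      omega
  · rintro ⟨p, q⟩ - hpq
    by_contra h
    exact hpq (hg p q (by omega))

section Combination

noncomputable def combination (n : ℕ) (lm : (ℕ × ℕ → ℝ) × (ℕ → ℝ)) :
    Matrix (Fin n) (Fin n) ℝ :=
  (∑ ab ∈ idx n, lm.1 ab • ((1 / (2 * (ab.1 : ℝ) * (ab.2 : ℝ))) • NESW n ab.1 ab.2)) +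
    ∑ i ∈ Icc 1 n, lm.2 i • ((1 / (2 * (n : ℝ))) • HV n i)

variable (lm : (ℕ × ℕ → ℝ) × (ℕ → ℝ))

lemma combination_apply (k l : Fin n) :
    combination n lm k l =
      ∑ ab ∈ idx n, lm.1 ab / (2 * ab.1 * ab.2) * NESW n ab.1 ab.2 k l +
        ∑ i ∈ Icc 1 n, lm.2 i / (2 * n) * HV n i k l := by
  simp only [combination, Matrix.add_apply, Matrix.sum_apply, Matrix.smul_apply, smul_eq_mul,
    ← mul_assoc, mul_one_div]

lemma combination_apply_comm (k l : Fin n) : combination n lm k l = combination n lm l k := by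
  simp only [combination_apply, NESW_apply_comm k l, HV_apply_comm _ k l]

lemma combination_apply_self (k : Fin n) : combination n lm k k = lm.2 (k + 1) / n := by
  have hk : (k : ℕ) + 1 ∈ Icc 1 n := mem_Icc.mpr ⟨by omega, k.isLt⟩
  rw [combination_apply, sum_eq_zero fun ab hab => by
    rw [NESW_apply_self (mem_idx.mp hab).2.2, mul_zero]]
  simp only [HV_apply_self, mul_ite, mul_zero, sum_ite_eq, hk, if_true, zero_add]
  field_simp

lemma mixedDiff_combination {a b : ℕ} (hab : (a, b) ∈ idx n) :
    mixedDiff n (a - 1) (n - b - 1) (combination n lm) =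
      lm.1 (a, b) / (2 * a * b) * (if a + b = n then 2 else 1) := by
  have hp : a - 1 + 1 < n := by rw [mem_idx] at hab; omega
  have hq : n - b - 1 + 1 < n := by rw [mem_idx] at hab; omega
  simp only [combination, map_add, map_sum, map_smul, smul_eq_mul, mixedDiff_HV _ hp hq,
    mul_zero, sum_const_zero, add_zero]
  rw [sum_congr rfl fun ab' hab' => by rw [mixedDiff_NESW (b' := ab'.2) hab hab', Prod.mk.eta]]
  simp only [mul_ite, mul_zero, sum_ite_eq', hab, if_true]
  split_ifs <;> ring

lemma sum_combination :
    ∑ k, ∑ l, combination n lm k l = ∑ ab ∈ idx n, lm.1 ab + ∑ i ∈ Icc 1 n, lm.2 i := by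
  have hswap : ∀ {ι : Type} (s : Finset ι) (F : ι → Fin n → Fin n → ℝ),
      ∑ k, ∑ l, ∑ x ∈ s, F x k l = ∑ x ∈ s, ∑ k, ∑ l, F x k l := fun _ _ =>
    (sum_congr rfl fun _ _ => sum_comm).trans sum_comm
  simp only [combination_apply, sum_add_distrib, hswap, ← mul_sum]
  congr 1 <;> refine sum_congr rfl fun x hx => ?_
  · obtain ⟨ha, hb, hab⟩ := mem_idx.mp hx
    rw [sum_NESW hab]
    field_simp
  · rw [sum_HV hx]
    have : (n : ℝ) ≠ 0 := by rw [mem_Icc] at hx; norm_cast; omega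
    field_simp

end Combination

section Coefficients

noncomputable def coeffs (n : ℕ) (C : Matrix (Fin n) (Fin n) ℝ) : (ℕ × ℕ → ℝ) × (ℕ → ℝ) :=
  (fun ab => if ab ∈ idx n then
      (if ab.1 + ab.2 = n then 1 else 2) * ab.1 * ab.2 * mixedDiff n (ab.1 - 1) (n - ab.2 - 1) C
    else 0,
   fun i => if i ∈ Icc 1 n then n * entry n (i - 1) (i - 1) C else 0)

variable {C : Matrix (Fin n) (Fin n) ℝ}

lemma coeffs_fst_nonneg (hC : IsMonge C) (ab : ℕ × ℕ) : 0 ≤ (coeffs n C).1 ab := by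
  by_cases h : ab ∈ idx n
  · obtain ⟨ha, hb, hab⟩ := mem_idx.mp h
    have hd := mixedDiff_nonneg hC (show ab.1 - 1 + 1 < n by omega)
      (show n - ab.2 - 1 + 1 < n by omega)
    have hw : (0 : ℝ) ≤ if ab.1 + ab.2 = n then 1 else 2 := by split_ifs <;> norm_num
    simp only [coeffs, h, if_true]
    positivity
  · simp only [coeffs, h, if_false, le_refl]

lemma coeffs_snd_nonneg (hC : ∀ i j, 0 ≤ C i j) (i : ℕ) : 0 ≤ (coeffs n C).2 i := by
  by_cases h : i ∈ Icc 1 n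
  · simp only [coeffs, h, if_true]
    rw [mem_Icc] at h
    rw [entry_apply (by omega) (by omega)]
    have := hC ⟨i - 1, by omega⟩ ⟨i - 1, by omega⟩
    positivity
  · simp only [coeffs, h, if_false, le_refl]

lemma coeffs_fst_div_mul_NESW (k l : Fin n) (hkl : k ≤ l) {ab : ℕ × ℕ} (hab : ab ∈ idx n) :
    (coeffs n C).1 ab / (2 * ab.1 * ab.2) * NESW n ab.1 ab.2 k l =
      if k < ab.1 ∧ n - ab.2 ≤ l then
        triWeight (ab.1 - 1) (n - ab.2 - 1) * mixedDiff n (ab.1 - 1) (n - ab.2 - 1) C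
      else 0 := by
  obtain ⟨ha, hb, hab'⟩ := mem_idx.mp hab
  rw [NESW_apply_of_le hab' hkl]
  simp only [coeffs, hab, if_true, triWeight]
  split_ifs <;> (try omega) <;> field_simp <;> ring

lemma sum_coeffs_fst_mul_NESW (hC : C.IsSymm) {k l : Fin n} (hkl : k ≤ l) :
    ∑ ab ∈ idx n, (coeffs n C).1 ab / (2 * ab.1 * ab.2) * NESW n ab.1 ab.2 k l =
      C k l - (C k k + C l l) / 2 := by
  rw [sum_congr rfl fun ab hab => coeffs_fst_div_mul_NESW k l hkl hab,
    sum_idx_eq_sum_Ico_sum_Ico (g := fun p q => triWeight p q * mixedDiff n p q C)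
      (fun p q hqp => by rw [triWeight_of_lt hqp, zero_mul]) l.isLt,
    sum_sum_triWeight_mul _ (mixedDiff_comm hC)]
  simp only [mixedDiff, LinearMap.sub_apply, LinearMap.add_apply]
  rw [sum_Ico_sum_Ico_mixed (fun p q => entry n p q C) hkl, entry_comm hC l k]
  simp only [entry_apply k.isLt l.isLt, entry_apply k.isLt k.isLt, entry_apply l.isLt l.isLt]
  ring

lemma sum_coeffs_snd_mul_HV (k l : Fin n) :
    ∑ i ∈ Icc 1 n, (coeffs n C).2 i / (2 * n) * HV n i k l = (C k k + C l l) / 2 := by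
  have hk : (k : ℕ) + 1 ∈ Icc 1 n := mem_Icc.mpr ⟨by omega, k.isLt⟩
  have hl : (l : ℕ) + 1 ∈ Icc 1 n := mem_Icc.mpr ⟨by omega, l.isLt⟩
  have hn : (n : ℝ) ≠ 0 := by have := k.pos; positivity
  rw [sum_congr rfl fun i hi => by rw [show (coeffs n C).2 i = _ from if_pos hi]]
  simp only [HV, Matrix.of_apply, mul_add, mul_ite, mul_one, mul_zero, sum_add_distrib,
    sum_ite_eq, hk, hl, if_true, Nat.add_sub_cancel, entry_apply k.isLt k.isLt,
    entry_apply l.isLt l.isLt]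
  field_simp

lemma combination_coeffs (hC : C.IsSymm) : combination n (coeffs n C) = C := by
  ext k l
  wlog hkl : k ≤ l generalizing k l
  · rw [combination_apply_comm, ← hC.apply k l]
    exact this l k (le_of_not_ge hkl)
  rw [combination_apply, sum_coeffs_fst_mul_NESW hC hkl, sum_coeffs_snd_mul_HV]
  ring

lemma coeffs_combination {lm : (ℕ × ℕ → ℝ) × (ℕ → ℝ)} (h₁ : ∀ ab ∉ idx n, lm.1 ab = 0)
    (h₂ : ∀ i ∉ Icc 1 n, lm.2 i = 0) : coeffs n (combination n lm) = lm := by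
  refine Prod.ext (funext fun ab => ?_) (funext fun i => ?_)
  · by_cases hab : ab ∈ idx n
    · obtain ⟨ha, hb, -⟩ := mem_idx.mp hab
      simp only [coeffs, hab, if_true, mixedDiff_combination lm hab]
      split_ifs <;> field_simp
    · simp only [coeffs, hab, if_false, h₁ ab hab]
  · by_cases hi : i ∈ Icc 1 n
    · have hi' := mem_Icc.mp hi
      have hn : (n : ℝ) ≠ 0 := by norm_cast; omega
      simp only [coeffs, hi, if_true]
      rw [entry_apply (by omega) (by omega), combination_apply_self, Nat.sub_add_cancel hi'.1]
      field_simp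
    · simp only [coeffs, hi, if_false, h₂ i hi]

end Coefficients

end SymmetricMonge

open SymmetricMonge

theorem sm_unique_convex_combination_general (n : ℕ)
    (C : Matrix (Fin n) (Fin n) ℝ) (hC : C ∈ SM n) :
    ∃! lm : (ℕ × ℕ → ℝ) × (ℕ → ℝ),
      (∀ ab, 0 ≤ lm.1 ab) ∧ (∀ i, 0 ≤ lm.2 i) ∧
      (∀ ab ∉ idx n, lm.1 ab = 0) ∧ (∀ i ∉ Finset.Icc 1 n, lm.2 i = 0) ∧
      ((∑ ab ∈ idx n, lm.1 ab) + ∑ i ∈ Finset.Icc 1 n, lm.2 i) = 1 ∧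
      C = (∑ ab ∈ idx n,
            lm.1 ab • ((1 / (2 * (ab.1 : ℝ) * (ab.2 : ℝ))) • NESW n ab.1 ab.2)) +
          ∑ i ∈ Finset.Icc 1 n, lm.2 i • ((1 / (2 * (n : ℝ))) • HV n i) := by
  obtain ⟨hsymm, hnonneg, hsum, hmonge⟩ := hC
  refine ⟨coeffs n C, ⟨coeffs_fst_nonneg hmonge, coeffs_snd_nonneg hnonneg,
    fun ab h => if_neg h, fun i h => if_neg h, ?_, (combination_coeffs hsymm).symm⟩, ?_⟩
  · rw [← sum_combination, combination_coeffs hsymm, hsum]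
  · rintro lm ⟨-, -, h₁, h₂, -, rfl⟩
    exact (coeffs_combination h₁ h₂).symm

/-- Every matrix in the symmetric Monge polytope is a *unique* convex combination
of the matrices `(1/(2ab)) • NESW (a × b)` for `a, b ≥ 1` with `a + b ≤ n`, together with
the matrices `(1/(2n)) • HV i` for `1 ≤ i ≤ n`. -/
theorem sm_unique_convex_combination (n : ℕ) (hn : 2 ≤ n)
    (C : Matrix (Fin n) (Fin n) ℝ) (hC : C ∈ SM n) :
    ∃! lm : (ℕ × ℕ → ℝ) × (ℕ → ℝ),
      (∀ ab, 0 ≤ lm.1 ab) ∧ (∀ i, 0 ≤ lm.2 i) ∧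
      (∀ ab ∉ idx n, lm.1 ab = 0) ∧ (∀ i ∉ Finset.Icc 1 n, lm.2 i = 0) ∧
      ((∑ ab ∈ idx n, lm.1 ab) + ∑ i ∈ Finset.Icc 1 n, lm.2 i) = 1 ∧
      C = (∑ ab ∈ idx n,
            lm.1 ab • ((1 / (2 * (ab.1 : ℝ) * (ab.2 : ℝ))) • NESW n ab.1 ab.2)) +
          ∑ i ∈ Finset.Icc 1 n, lm.2 i • ((1 / (2 * (n : ℝ))) • HV n i) :=
  sm_unique_convex_combination_general n C hC
end

section
/- Fix an integer n ≥ 2 and set m = n(n−1)/2. Let HM_n^k(ℕ) denote the set of n×n matrices with entries in ℕ that are symmetric, have all diagonal entries zero, have the Monge property, and whose entries sum to 2k. Then the limit as k → ∞ of #HM_n^k(ℕ) · (m−1)! · sf(n−1)^2 / k^{m−1} equals 1, where sf(n) = Π_{i=1}^n i! is the superfactorial. -/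
open Finset Filter

/-- The Monge property for an `n × n` matrix with `ℕ` entries (indices are 0-based). -/
def IsMongeNat {n : ℕ} (C : Matrix (Fin n) (Fin n) ℕ) : Prop :=
  ∀ i I j J : Fin n, i < I → j < J → C i j + C I J ≤ C i J + C I j

/-- The superfactorial `sf n = 1! · 2! · ⋯ · n!`. -/
def sf (n : ℕ) : ℕ := ∏ i ∈ Finset.Icc 1 n, Nat.factorial i

/-- `HMk n k`: hollow symmetric `n × n` Monge matrices over `ℕ` whose entries sum
to `2k`. -/
def HMk (n k : ℕ) : Set (Matrix (Fin n) (Fin n) ℕ) :=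
  {C | C.IsSymm ∧ (∀ i, C i i = 0) ∧ IsMongeNat C ∧ (∑ i, ∑ j, C i j) = 2 * k}

/-! Write `n = m + 1`. A hollow symmetric Monge matrix over `ℕ` is, in exactly one way, a
combination with coefficients in `ℕ` of the `m(m+1)/2` elementary matrices indexed by the
intervals `[p, q]` of gaps between consecutive indices; the coefficients are the second
differences of its upper triangle, and Monge-ness is exactly their nonnegativity. The elementary
matrix of `[p, q]` has entry sum `2(p+1)(m-q)`, so `#HM_n^k` counts the solutions of one linear
equation `∑ wₓ sₓ = k` with weights `wₓ = (p+1)(m-q)`, and `∏ wₓ = sf(m)²`.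

The weight of `[0, m-1]` is `1`; treating that unknown as a slack variable leaves the inequality
`∑ wₓ sₓ ≤ k` in `N = m(m+1)/2 - 1` unknowns. Writing `yₓ = wₓ sₓ + rₓ` with `rₓ < wₓ`, its
solutions number `∏ wₓ⁻¹ · #{y | ∑ wₓ ⌊yₓ / wₓ⌋ ≤ k}`, and this set is squeezed between the
simplices `{∑ yₓ ≤ k}` and `{∑ yₓ ≤ k + ∑ (wₓ - 1)}`, both of size `~ k^N / N!`. -/

open Topology Asymptotics

theorem ncard_add_eq_eq_ncard_le {α : Type*} (f : α → ℕ) (k : ℕ) :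
    {p : ℕ × α | p.1 + f p.2 = k}.ncard = {a | f a ≤ k}.ncard := by
  refine Set.ncard_congr (fun p _ => p.2) (fun p hp => ?_) (fun p q hp hq hpq => ?_)
    (fun a ha => ⟨(k - f a, a), ?_, rfl⟩)
  · simp only [Set.mem_ofPred_eq] at hp ⊢
    omega
  · simp only [Set.mem_ofPred_eq] at hp hq
    ext <;> grind
  · simp only [Set.mem_ofPred_eq] at ha ⊢
    omega

section WeightedCompositions

variable {ι : Type*} [Fintype ι]

theorem ncard_sum_eq_eq_choose [DecidableEq ι] (N : ℕ) :
    {y : ι → ℕ | ∑ i, y i = N}.ncard = (Fintype.card ι + N - 1).choose N := by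
  have : {y : ι → ℕ | ∑ i, y i = N} = ((piAntidiag univ N : Finset (ι → ℕ)) : Set (ι → ℕ)) := by
    ext; simp
  rw [this, Set.ncard_coe_finset, ← map_sym_eq_piAntidiag, card_map, sym_univ, card_univ,
    Sym.card_sym_eq_choose]

theorem ncard_sum_le_eq_choose (N : ℕ) :
    {y : ι → ℕ | ∑ i, y i ≤ N}.ncard = (N + Fintype.card ι).choose (Fintype.card ι) := by
  classical
  rw [← ncard_add_eq_eq_ncard_le, ← Set.ncard_congr' (Equiv.piOptionEquivProd.subtypeEquiv
    (p := (· ∈ {z : Option ι → ℕ | ∑ o, z o = N})) fun z => by simp [Fintype.sum_option]),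
    ncard_sum_eq_eq_choose, Fintype.card_option, Nat.add_right_comm, add_tsub_cancel_right,
    add_comm, Nat.choose_symm_add]

theorem finite_sum_le (N : ℕ) : {y : ι → ℕ | ∑ i, y i ≤ N}.Finite :=
  (Set.Finite.pi fun _ => Set.finite_Iic N).subset fun y hy i _ =>
    (single_le_sum (fun j _ => Nat.zero_le (y j)) (mem_univ i)).trans hy

theorem tendsto_choose_add_mul_factorial_div_pow (c d : ℕ) :
    Tendsto (fun k : ℕ => ((k + c).choose d : ℝ) * d.factorial / (k : ℝ) ^ d) atTop (𝓝 1) := by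
  have hshift : (fun k : ℕ => ((k + c : ℕ) : ℝ)) ~[atTop] fun k => (k : ℝ) := by
    have : (fun _ : ℕ => (c : ℝ)) =o[atTop] fun k => (k : ℝ) :=
      (isLittleO_const_id_atTop (c : ℝ)).comp_tendsto tendsto_natCast_atTop_atTop
    exact (IsEquivalent.refl.add_isLittleO this).congr_left (.of_forall fun k => by simp)
  have hchoose : (fun k : ℕ => ((k + c).choose d : ℝ)) ~[atTop]
      fun k => (k : ℝ) ^ d / d.factorial :=
    ((isEquivalent_choose d).comp_tendsto (tendsto_add_atTop_nat c)).trans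
      ((hshift.pow d).div IsEquivalent.refl)
  have hne : ∀ᶠ k : ℕ in atTop, (k : ℝ) ^ d / d.factorial ≠ 0 := by
    filter_upwards [eventually_ge_atTop 1] with k hk
    positivity
  refine ((isEquivalent_iff_tendsto_one hne).mp hchoose).congr fun k => ?_
  simp only [Pi.div_apply]
  field_simp

theorem ncard_sum_mul_le_mul_prod (e : ι → ℕ) [∀ i, NeZero (e i)] (k : ℕ) :
    {t : ι → ℕ | ∑ i, e i * t i ≤ k}.ncard * ∏ i, e i =
      {y : ι → ℕ | ∑ i, e i * (y i / e i) ≤ k}.ncard := by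
  let E : (ι → ℕ) ≃ (ι → ℕ) × ∀ i, Fin (e i) :=
    (Equiv.piCongrRight fun i => Nat.divModEquiv (e i)).trans
      (Equiv.arrowProdEquivProdArrow _ _ _)
  rw [Set.ncard_congr' (E.subtypeEquiv
      (p := (· ∈ {y : ι → ℕ | ∑ i, e i * (y i / e i) ≤ k}))
      (q := (· ∈ {t : ι → ℕ | ∑ i, e i * t i ≤ k} ×ˢ Set.univ)) fun y => by simp [E]),
    Set.ncard_prod, Set.ncard_univ, Nat.card_pi]
  simp

theorem sum_le_add_of_sum_mul_div_le (e : ι → ℕ) [∀ i, NeZero (e i)] {y : ι → ℕ} {k : ℕ}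
    (hy : ∑ i, e i * (y i / e i) ≤ k) : ∑ i, y i ≤ k + ∑ i, (e i - 1) := by
  have hmod (i : ι) : y i ≤ e i * (y i / e i) + (e i - 1) := by
    have := Nat.div_add_mod (y i) (e i)
    have := Nat.mod_lt (y i) (NeZero.pos (e i))
    omega
  calc ∑ i, y i ≤ ∑ i, (e i * (y i / e i) + (e i - 1)) := sum_le_sum fun i _ => hmod i
    _ ≤ k + ∑ i, (e i - 1) := by rw [sum_add_distrib]; exact Nat.add_le_add_right hy _

theorem choose_le_ncard_sum_mul_div_le (e : ι → ℕ) [∀ i, NeZero (e i)] (k : ℕ) :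
    (k + Fintype.card ι).choose (Fintype.card ι) ≤
      {y : ι → ℕ | ∑ i, e i * (y i / e i) ≤ k}.ncard := by
  rw [← ncard_sum_le_eq_choose]
  exact Set.ncard_le_ncard (fun y hy => (sum_le_sum fun i _ => Nat.mul_div_le (y i) (e i)).trans hy)
    ((finite_sum_le _).subset fun _ => sum_le_add_of_sum_mul_div_le e)

theorem ncard_sum_mul_div_le_le_choose (e : ι → ℕ) [∀ i, NeZero (e i)] (k : ℕ) :
    {y : ι → ℕ | ∑ i, e i * (y i / e i) ≤ k}.ncard ≤
      (k + (∑ i, (e i - 1) + Fintype.card ι)).choose (Fintype.card ι) := by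
  rw [← add_assoc, ← ncard_sum_le_eq_choose]
  exact Set.ncard_le_ncard (fun _ => sum_le_add_of_sum_mul_div_le e) (finite_sum_le _)

theorem tendsto_ncard_sum_mul_le (e : ι → ℕ) (he : ∀ i, e i ≠ 0) :
    Tendsto (fun k : ℕ => ({t : ι → ℕ | ∑ i, e i * t i ≤ k}.ncard : ℝ) *
      (Fintype.card ι).factorial * (∏ i, e i : ℕ) / (k : ℝ) ^ Fintype.card ι) atTop (𝓝 1) := by
  have : ∀ i, NeZero (e i) := fun i => ⟨he i⟩
  set d := Fintype.card ι
  have hbox (k : ℕ) : ({t : ι → ℕ | ∑ i, e i * t i ≤ k}.ncard : ℝ) * d.factorial * (∏ i, e i : ℕ)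
      = ({y : ι → ℕ | ∑ i, e i * (y i / e i) ≤ k}.ncard : ℝ) * d.factorial := by
    rw [← ncard_sum_mul_le_mul_prod]
    push_cast
    ring
  refine tendsto_of_tendsto_of_tendsto_of_le_of_le (tendsto_choose_add_mul_factorial_div_pow d d)
    (tendsto_choose_add_mul_factorial_div_pow (∑ i, (e i - 1) + d) d) (fun k => ?_) (fun k => ?_)
  · dsimp only
    rw [hbox]
    gcongr
    exact_mod_cast choose_le_ncard_sum_mul_div_le e k
  · dsimp only
    rw [hbox]
    gcongr
    exact_mod_cast ncard_sum_mul_div_le_le_choose e k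

theorem ncard_sum_mul_eq_eq_ncard_le [DecidableEq ι] (e : ι → ℕ) {i₀ : ι} (h : e i₀ = 1)
    (k : ℕ) : {s : ι → ℕ | ∑ i, e i * s i = k}.ncard =
      {t : {i // i ≠ i₀} → ℕ | ∑ i : {i // i ≠ i₀}, e i * t i ≤ k}.ncard := by
  rw [← ncard_add_eq_eq_ncard_le]
  exact Set.ncard_congr' ((Equiv.piSplitAt i₀ _).subtypeEquiv fun s => by
    simp [Fintype.sum_eq_add_sum_subtype_ne _ i₀, h])

theorem tendsto_ncard_sum_mul_eq (e : ι → ℕ) (he : ∀ i, e i ≠ 0) {i₀ : ι} (h : e i₀ = 1) :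
    Tendsto (fun k : ℕ => ({s : ι → ℕ | ∑ i, e i * s i = k}.ncard : ℝ) *
      (Fintype.card ι - 1).factorial * (∏ i, e i : ℕ) / (k : ℝ) ^ (Fintype.card ι - 1))
      atTop (𝓝 1) := by
  classical
  have hcard : Fintype.card {i // i ≠ i₀} = Fintype.card ι - 1 := by simp
  simp only [ncard_sum_mul_eq_eq_ncard_le e h, Fintype.prod_eq_mul_prod_subtype_ne e i₀, h,
    one_mul, ← hcard]
  exact tendsto_ncard_sum_mul_le (fun i : {i // i ≠ i₀} => e i) fun i => he i

end WeightedCompositions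

theorem sum_sum_ite_and {α β : Type*} [Fintype α] [Fintype β] (P : α → Prop) (Q : β → Prop)
    [DecidablePred P] [DecidablePred Q] (c : ℕ) :
    ∑ a, ∑ b, (if P a ∧ Q b then c else 0) = #{a | P a} * #{b | Q b} * c := by
  simp only [ite_and, sum_ite_irrel, sum_const_zero, sum_ite, sum_const, smul_eq_mul]
  simp [mul_assoc]

section
variable {m : ℕ}

theorem card_filter_val_le (p : Fin m) : #{i : Fin (m + 1) | (i : ℕ) ≤ p} = p + 1 := by
  have : ({i : Fin (m + 1) | (i : ℕ) ≤ p} : Finset _) = Iic p.castSucc := by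
    ext; simp [Fin.le_def]
  rw [this, Fin.card_Iic, Fin.val_castSucc]

theorem card_filter_lt_val (q : Fin m) : #{j : Fin (m + 1) | (q : ℕ) < j} = m - q := by
  have : ({j : Fin (m + 1) | (q : ℕ) < j} : Finset _) = Ioi q.castSucc := by
    ext; simp [Fin.lt_def]
  rw [this, Fin.card_Ioi, Fin.val_castSucc, add_tsub_cancel_right]

end

theorem sf_eq_prod_range (m : ℕ) : sf m = ∏ i ∈ range m, (i + 1).factorial := by
  rw [sf, range_eq_Ico, prod_Ico_add' (fun i => i.factorial) 0 m 1, zero_add,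
    Ico_add_one_right_eq_Icc]

namespace HollowMonge

variable {m : ℕ}

/-- `(p, q)` stands for the gaps `p, …, q` between consecutive indices of `Fin (m + 1)`, and thus
for the elementary matrix with entry `1` at `(i, j)` and `(j, i)` when `i ≤ p ≤ q < j`. -/
abbrev GapInterval (m : ℕ) : Type := {x : Fin m × Fin m // x.1 ≤ x.2}

def weight (x : GapInterval m) : ℕ := (x.1.1 + 1) * (m - x.1.2)

def cutSum (s : GapInterval m → ℕ) (i j : ℕ) : ℕ :=
  ∑ x, if i ≤ x.1.1 ∧ (x.1.2 : ℕ) < j then s x else 0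

def ofCoeffs (s : GapInterval m → ℕ) : Matrix (Fin (m + 1)) (Fin (m + 1)) ℕ :=
  Matrix.of fun i j => cutSum s i j + cutSum s j i

def upper (C : Matrix (Fin (m + 1)) (Fin (m + 1)) ℕ) (i j : ℕ) : ℕ :=
  if h : i ≤ j ∧ j ≤ m then C ⟨i, by omega⟩ ⟨j, by omega⟩ else 0

/-- Second differences of `upper C`; for Monge `C` the truncated subtraction is exact. -/
def coeffs (C : Matrix (Fin (m + 1)) (Fin (m + 1)) ℕ) (x : GapInterval m) : ℕ :=
  upper C x.1.1 (x.1.2 + 1) + upper C (x.1.1 + 1) x.1.2 -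
    (upper C x.1.1 x.1.2 + upper C (x.1.1 + 1) (x.1.2 + 1))

theorem val_fst_le_val_snd (x : GapInterval m) : (x.1.1 : ℕ) ≤ x.1.2 := x.2

theorem cutSum_eq_zero_of_le (s : GapInterval m → ℕ) {i j : ℕ} (h : j ≤ i) : cutSum s i j = 0 :=
  sum_eq_zero fun x _ => if_neg fun hx => by have := val_fst_le_val_snd x; omega

theorem cutSum_second_diff (s : GapInterval m → ℕ) (x : GapInterval m) :
    cutSum s x.1.1 (x.1.2 + 1) + cutSum s (x.1.1 + 1) x.1.2 =
      cutSum s x.1.1 x.1.2 + cutSum s (x.1.1 + 1) (x.1.2 + 1) + s x := by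
  rw [← Fintype.sum_ite_eq' x s]
  simp only [cutSum, ← sum_add_distrib]
  refine sum_congr rfl fun y _ => ?_
  have := val_fst_le_val_snd y
  simp only [Subtype.ext_iff, Prod.ext_iff, Fin.ext_iff]
  split_ifs <;> omega

theorem ofCoeffs_isSymm (s : GapInterval m → ℕ) : (ofCoeffs s).IsSymm :=
  Matrix.IsSymm.ext fun _ _ => add_comm _ _

theorem ofCoeffs_apply_self (s : GapInterval m → ℕ) (i : Fin (m + 1)) : ofCoeffs s i i = 0 := by
  simp [ofCoeffs, cutSum_eq_zero_of_le]

theorem isMongeNat_ofCoeffs (s : GapInterval m → ℕ) : IsMongeNat (ofCoeffs s) := by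
  intro i I j J hiI hjJ
  rw [Fin.lt_def] at hiI hjJ
  simp only [ofCoeffs, Matrix.of_apply, cutSum, ← sum_add_distrib]
  refine sum_le_sum fun x _ => ?_
  have := val_fst_le_val_snd x
  split_ifs <;> omega

theorem sum_sum_cutSum (s : GapInterval m → ℕ) :
    ∑ i : Fin (m + 1), ∑ j : Fin (m + 1), cutSum s i j = ∑ x, weight x * s x := by
  simp only [cutSum]
  rw [← Fintype.sum_prod_type', sum_comm]
  refine sum_congr rfl fun x _ => ?_
  simp only [Fintype.sum_prod_type]
  rw [sum_sum_ite_and, card_filter_val_le, card_filter_lt_val]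
  rfl

theorem sum_sum_ofCoeffs (s : GapInterval m → ℕ) :
    ∑ i, ∑ j, ofCoeffs s i j = 2 * ∑ x, weight x * s x := by
  simp only [ofCoeffs, Matrix.of_apply, sum_add_distrib]
  rw [sum_comm (f := fun i j : Fin (m + 1) => cutSum s j i), sum_sum_cutSum]
  ring

theorem upper_ofCoeffs (s : GapInterval m → ℕ) {i j : ℕ} (hj : j ≤ m) :
    upper (ofCoeffs s) i j = cutSum s i j := by
  unfold upper
  split_ifs with h
  · simp [ofCoeffs, cutSum_eq_zero_of_le s h.1]
  · rw [cutSum_eq_zero_of_le s (by omega)]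

theorem coeffs_ofCoeffs (s : GapInterval m → ℕ) : coeffs (ofCoeffs s) = s := by
  funext x
  have hq : (x.1.2 : ℕ) + 1 ≤ m := x.1.2.isLt
  simp only [coeffs, upper_ofCoeffs s hq, upper_ofCoeffs s (Nat.le_of_succ_le hq),
    cutSum_second_diff]
  omega

section
variable {C : Matrix (Fin (m + 1)) (Fin (m + 1)) ℕ}

theorem upper_add_upper_le (hC : ∀ i, C i i = 0) (hM : IsMongeNat C) {p q : ℕ} (hpq : p ≤ q)
    (hq : q < m) :
    upper C p q + upper C (p + 1) (q + 1) ≤ upper C p (q + 1) + upper C (p + 1) q := by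
  rcases hpq.eq_or_lt with rfl | hlt
  · simp [upper, hC]
  · simp only [upper]
    rw [dif_pos (by omega), dif_pos (by omega), dif_pos (by omega), dif_pos (by omega)]
    exact hM _ _ _ _ (by simp [Fin.lt_def]) (by simp [Fin.lt_def])

theorem cutSum_coeffs (hC : ∀ i, C i i = 0) (hM : IsMongeNat C) (i j : ℕ) (hj : j ≤ m) :
    cutSum (coeffs C) i j = upper C i j := by
  rcases le_or_gt j i with hji | hij
  · rw [cutSum_eq_zero_of_le _ hji, upper]
    split_ifs with h
    · obtain rfl : i = j := by omega
      exact (hC _).symm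
    · rfl
  obtain ⟨q, rfl⟩ : ∃ q, j = q + 1 := ⟨j - 1, by omega⟩
  let x : GapInterval m := ⟨(⟨i, by omega⟩, ⟨q, by omega⟩), by simp [Fin.le_def]; omega⟩
  have hdiff : cutSum (coeffs C) i (q + 1) + cutSum (coeffs C) (i + 1) q =
      cutSum (coeffs C) i q + cutSum (coeffs C) (i + 1) (q + 1) + coeffs C x :=
    cutSum_second_diff (coeffs C) x
  have hmonge := upper_add_upper_le hC hM (p := i) (q := q) (by omega) (by omega)
  have hx : coeffs C x = upper C i (q + 1) + upper C (i + 1) q -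
      (upper C i q + upper C (i + 1) (q + 1)) := rfl
  rw [cutSum_coeffs hC hM i q (by omega), cutSum_coeffs hC hM (i + 1) q (by omega),
    cutSum_coeffs hC hM (i + 1) (q + 1) hj] at hdiff
  omega
termination_by j - i

theorem ofCoeffs_coeffs (hS : C.IsSymm) (hC : ∀ i, C i i = 0) (hM : IsMongeNat C) :
    ofCoeffs (coeffs C) = C := by
  ext i j
  simp only [ofCoeffs, Matrix.of_apply, cutSum_coeffs hC hM _ _ (Nat.le_of_lt_succ i.isLt),
    cutSum_coeffs hC hM _ _ (Nat.le_of_lt_succ j.isLt), upper]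
  split_ifs with hij hji hji
  · obtain rfl : i = j := by omega
    simp [hC]
  · simp
  · simp [hS.apply i j]
  · omega

end

theorem ncard_HMk (k : ℕ) :
    (HMk (m + 1) k).ncard = {s : GapInterval m → ℕ | ∑ x, weight x * s x = k}.ncard := by
  rw [← Set.ncard_image_of_injective _ (Function.LeftInverse.injective coeffs_ofCoeffs)]
  congr 1
  ext C
  constructor
  · rintro ⟨hS, hC, hM, hsum⟩
    refine ⟨coeffs C, ?_, ofCoeffs_coeffs hS hC hM⟩
    have := sum_sum_ofCoeffs (coeffs C)
    rw [ofCoeffs_coeffs hS hC hM, hsum] at this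
    exact (Nat.eq_of_mul_eq_mul_left two_pos this).symm
  · rintro ⟨s, hs, rfl⟩
    exact ⟨ofCoeffs_isSymm s, ofCoeffs_apply_self s, isMongeNat_ofCoeffs s,
      by rw [sum_sum_ofCoeffs, hs]⟩

theorem card_gapInterval : Fintype.card (GapInterval m) = (m + 1) * m / 2 := by
  rw [← Fintype.card_congr Sym2.sortEquiv, Sym2.card, Fintype.card_fin, Nat.choose_two_right,
    add_tsub_cancel_right]

theorem prod_val_fst_add_one : ∏ x : GapInterval m, ((x.1.1 : ℕ) + 1) = sf m := by
  rw [← prod_subtype ({x : Fin m × Fin m | x.1 ≤ x.2} : Finset _) (by simp)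
      (fun x => (x.1 : ℕ) + 1), prod_filter, Fintype.prod_prod_type, Finset.prod_comm]
  simp only [← prod_filter, filter_ge_eq_Iic]
  have hfact (q : Fin m) : ∏ p ∈ Iic q, ((p : ℕ) + 1) = (q + 1 : ℕ).factorial := by
    rw [← prod_range_add_one_eq_factorial, Nat.range_succ_eq_Iic, ← Fin.map_valEmbedding_Iic,
      prod_map]
    rfl
  simp only [hfact, Fin.prod_univ_eq_prod_range (fun q => (q + 1).factorial), sf_eq_prod_range]

theorem prod_weight : ∏ x : GapInterval m, weight x = sf m ^ 2 := by
  let reflect : GapInterval m ≃ GapInterval m :=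
    { toFun x := ⟨(x.1.2.rev, x.1.1.rev), Fin.rev_le_rev.2 x.2⟩
      invFun x := ⟨(x.1.2.rev, x.1.1.rev), Fin.rev_le_rev.2 x.2⟩
      left_inv x := by simp
      right_inv x := by simp }
  have hreflect : ∏ x : GapInterval m, (m - x.1.2) = ∏ x : GapInterval m, ((x.1.1 : ℕ) + 1) :=
    Fintype.prod_equiv reflect _ _ fun x => by simp [reflect, Fin.val_rev]; omega
  simp only [weight, prod_mul_distrib, hreflect, prod_val_fst_add_one, sq]

theorem weight_ne_zero (x : GapInterval m) : weight x ≠ 0 :=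
  mul_ne_zero (Nat.succ_ne_zero _) (Nat.sub_ne_zero_of_lt x.1.2.isLt)

theorem exists_weight_eq_one (hm : 0 < m) : ∃ x : GapInterval m, weight x = 1 :=
  ⟨⟨(⟨0, hm⟩, ⟨m - 1, by omega⟩), Nat.zero_le _⟩, by simp only [weight]; omega⟩

end HollowMonge

/-- With `m = n(n-1)/2`, we have `#HM_n^k(ℕ) ∼ k^(m-1) / ((m-1)! · sf(n-1)²)`
as `k → ∞`. -/
theorem hollow_symmetric_monge_count_asymptotic (n : ℕ) (hn : 2 ≤ n) :
    Tendsto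
      (fun k : ℕ =>
        ((HMk n k).ncard : ℝ) * (Nat.factorial (n * (n - 1) / 2 - 1)) *
          ((sf (n - 1) : ℝ)) ^ 2 / (k : ℝ) ^ (n * (n - 1) / 2 - 1))
      atTop (nhds 1) := by
  obtain ⟨m, rfl⟩ : ∃ m, n = m + 1 := ⟨n - 1, by omega⟩
  obtain ⟨x₀, hx₀⟩ := HollowMonge.exists_weight_eq_one (m := m) (by omega)
  have key := tendsto_ncard_sum_mul_eq _ HollowMonge.weight_ne_zero hx₀
  rw [HollowMonge.card_gapInterval, HollowMonge.prod_weight] at key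
  simpa only [add_tsub_cancel_right, HollowMonge.ncard_HMk, Nat.cast_pow] using key
end

section
/- Fix an integer n ≥ 2 and let C be a matrix in the hollow symmetric Monge polytope HM_n. Then the function d(i,j) = c_{i,j} is a metric on {1,…,n} (that is, c_{i,j} ≤ c_{i,k} + c_{k,j} for all i, j, k, and c_{i,j} > 0 whenever i ≠ j) if and only if there exist strictly positive real numbers λ_1, …, λ_{n−1} with Σ_{a=1}^{n−1} λ_a = 1 such that C = Σ_{a=1}^{n−1} λ_a · (1/(2a(n−a))) · NESW(a×(n−a)); i.e., if and only if C lies in the relative interior of the metric face of HM_n. -/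
/-!
For `C ∈ HM n` satisfying the triangle inequality, `C` is additive along the line: for
`i < j < k` the Monge inequality on rows `i < j` and columns `j < k` gives
`c i j + c j k ≤ c i k + c j j = c i k`, and the triangle inequality gives the reverse. So `C` is
determined by its superdiagonal, `c k l = ∑_{k < a ≤ l} c (a-1) a`, and since the `(k, l)` entry of
`NESW(a × (n-a))` is `1` exactly when the cut at `a` separates `k` and `l`, this is the expansion
`C = ∑ₐ c (a-1) a • NESW(a × (n-a))`. Conversely, interval sums of positive weights form a
metric. As `NESW(a × (n-a))` has `2a(n-a)` ones, the weights `λₐ = 2a(n-a) c (a-1) a` are the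
convex coefficients, their sum being the total mass `1`.
-/

open Finset

lemma NESW_sub_apply {n a : ℕ} (ha : a ≤ n) (k l : Fin n) :
    NESW n a (n - a) k l = if a ∈ Ioc (min (k : ℕ) l) (max (k : ℕ) l) then 1 else 0 := by
  simp only [NESW, Matrix.of_apply, mem_Ioc]
  exact if_congr (by omega) rfl rfl

lemma sum_smul_NESW_apply (n : ℕ) (v : ℕ → ℝ) (k l : Fin n) :
    (∑ a ∈ Icc 1 (n - 1), v a • NESW n a (n - a)) k l =
      ∑ a ∈ Ioc (min (k : ℕ) l) (max (k : ℕ) l), v a := by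
  have hsub : Ioc (min (k : ℕ) l) (max (k : ℕ) l) ⊆ Icc 1 (n - 1) := by
    intro a; simp only [mem_Ioc, mem_Icc]; omega
  rw [Matrix.sum_apply, ← inter_eq_right.mpr hsub, ← sum_ite_mem]
  refine sum_congr rfl fun a ha => ?_
  rw [Matrix.smul_apply, NESW_sub_apply (by simp at ha; omega), smul_eq_mul, mul_ite, mul_one,
    mul_zero]

lemma card_filter_le_val {n a : ℕ} (ha : a ≤ n) : #{i : Fin n | a ≤ (i : ℕ)} = n - a := by
  have := card_filter_add_card_filter_not (s := univ) (fun i : Fin n => (i : ℕ) < a)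
  simp only [Fin.card_filter_val_lt, min_eq_right ha, not_lt, card_univ, Fintype.card_fin] at this
  omega

lemma sum_NESW_sub_entries {n a : ℕ} (ha : a ≤ n) :
    ∑ k, ∑ l, NESW n a (n - a) k l = 2 * (a : ℝ) * ((n - a : ℕ) : ℝ) := by
  have hsplit : ∀ k l : Fin n, NESW n a (n - a) k l =
      (if (k : ℕ) < a then 1 else 0) * (if a ≤ (l : ℕ) then 1 else 0) +
      (if a ≤ (k : ℕ) then 1 else 0) * (if (l : ℕ) < a then 1 else 0) := by
    intro k l
    rw [NESW_sub_apply ha]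
    split_ifs <;> simp only [mem_Ioc] at * <;> first | omega | norm_num
  simp_rw [hsplit, sum_add_distrib]
  rw [← sum_mul_sum, ← sum_mul_sum, sum_boole, sum_boole, Fin.card_filter_val_lt,
    card_filter_le_val ha, min_eq_right ha]
  ring

lemma sum_Ioc_min_max_le_add (v : ℕ → ℝ) (x y z : ℕ)
    (hv : ∀ a ∈ Ioc (min x z) (max x z) ∪ Ioc (min z y) (max z y), 0 ≤ v a) :
    ∑ a ∈ Ioc (min x y) (max x y), v a ≤
      ∑ a ∈ Ioc (min x z) (max x z), v a + ∑ a ∈ Ioc (min z y) (max z y), v a := by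
  calc ∑ a ∈ Ioc (min x y) (max x y), v a
      ≤ ∑ a ∈ Ioc (min x z) (max x z) ∪ Ioc (min z y) (max z y), v a :=
        sum_le_sum_of_subset_of_nonneg (fun a => by simp only [mem_union, mem_Ioc]; omega)
          fun a ha _ => hv a ha
    _ ≤ ∑ a ∈ Ioc (min x z) (max x z) ∪ Ioc (min z y) (max z y), v a +
          ∑ a ∈ Ioc (min x z) (max x z) ∩ Ioc (min z y) (max z y), v a :=
        le_add_of_nonneg_right <| sum_nonneg fun a ha =>
          hv a (mem_union_left _ (mem_inter.1 ha).1)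
    _ = _ := sum_union_inter

section SumSmulNESW

variable {n : ℕ} {v : ℕ → ℝ}

lemma sum_smul_NESW_triangle (hv : ∀ a ∈ Icc 1 (n - 1), 0 ≤ v a) (i j k : Fin n) :
    (∑ a ∈ Icc 1 (n - 1), v a • NESW n a (n - a)) i j ≤
      (∑ a ∈ Icc 1 (n - 1), v a • NESW n a (n - a)) i k +
        (∑ a ∈ Icc 1 (n - 1), v a • NESW n a (n - a)) k j := by
  simp only [sum_smul_NESW_apply]
  refine sum_Ioc_min_max_le_add v i j k fun a ha => hv a ?_
  simp only [mem_union, mem_Ioc, mem_Icc] at ha ⊢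
  omega

lemma sum_smul_NESW_pos (hv : ∀ a ∈ Icc 1 (n - 1), 0 < v a) {i j : Fin n} (hij : i ≠ j) :
    0 < (∑ a ∈ Icc 1 (n - 1), v a • NESW n a (n - a)) i j := by
  have hij' : (i : ℕ) ≠ j := Fin.val_ne_of_ne hij
  rw [sum_smul_NESW_apply]
  refine sum_pos (fun a ha => hv a ?_) (nonempty_Ioc.2 (by omega))
  simp only [mem_Ioc, mem_Icc] at ha ⊢
  omega

lemma sum_entries_sum_smul_NESW_s10 (v : ℕ → ℝ) :
    ∑ k, ∑ l, (∑ a ∈ Icc 1 (n - 1), v a • NESW n a (n - a)) k l =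
      ∑ a ∈ Icc 1 (n - 1), v a * (2 * (a : ℝ) * ((n - a : ℕ) : ℝ)) := by
  simp only [Matrix.sum_apply, Matrix.smul_apply, smul_eq_mul]
  calc _ = ∑ k, ∑ a ∈ Icc 1 (n - 1), ∑ l, v a * NESW n a (n - a) k l :=
        sum_congr rfl fun k _ => sum_comm
    _ = ∑ a ∈ Icc 1 (n - 1), v a * ∑ k, ∑ l, NESW n a (n - a) k l := by
        simp only [mul_sum]
        exact sum_comm
    _ = _ := sum_congr rfl fun a ha => by
        rw [sum_NESW_sub_entries (by rw [mem_Icc] at ha; omega)]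

end SumSmulNESW

lemma IsMonge.add_eq_of_triangle {n : ℕ} {C : Matrix (Fin n) (Fin n) ℝ} (hM : IsMonge C)
    (hdiag : ∀ i, C i i = 0) (htri : ∀ i j k, C i j ≤ C i k + C k j) {i j k : Fin n}
    (hij : i ≤ j) (hjk : j ≤ k) : C i k = C i j + C j k := by
  rcases hij.eq_or_lt with rfl | hij
  · rw [hdiag, zero_add]
  rcases hjk.eq_or_lt with rfl | hjk
  · rw [hdiag, add_zero]
  linarith [hM i j j k hij hjk, htri i k j, hdiag j]

def superdiag {n : ℕ} (C : Matrix (Fin n) (Fin n) ℝ) (a : ℕ) : ℝ :=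
  if h : 0 < a ∧ a < n then C ⟨a - 1, by omega⟩ ⟨a, h.2⟩ else 0

section LineAdditive

variable {n : ℕ} {C : Matrix (Fin n) (Fin n) ℝ}

lemma eq_sum_superdiag_of_le (hadd : ∀ i j k : Fin n, i ≤ j → j ≤ k → C i k = C i j + C j k)
    {k l : Fin n} (hkl : k ≤ l) :
    C k l = ∑ a ∈ Ioc (k : ℕ) l, superdiag C a := by
  have hdiag : ∀ i, C i i = 0 := fun i => by linarith [hadd i i i le_rfl le_rfl]
  obtain ⟨m, hm⟩ := l
  induction m with
  | zero =>
    obtain rfl : k = ⟨0, hm⟩ := le_antisymm hkl (Fin.le_def.2 (Nat.zero_le _))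
    simp [hdiag]
  | succ m ih =>
    rcases hkl.eq_or_lt with rfl | hlt
    · simp [hdiag]
    have hkm : k ≤ ⟨m, by omega⟩ := Nat.lt_succ_iff.1 (Fin.lt_def.1 hlt)
    rw [hadd k _ ⟨m + 1, hm⟩ hkm (Fin.le_def.2 (by simp)), ih _ hkm, sum_Ioc_succ_top hkm]
    simp [superdiag, hm]

lemma eq_sum_superdiag_smul_NESW
    (hadd : ∀ i j k : Fin n, i ≤ j → j ≤ k → C i k = C i j + C j k) (hsym : C.IsSymm) :
    C = ∑ a ∈ Icc 1 (n - 1), superdiag C a • NESW n a (n - a) := by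
  ext k l
  rw [sum_smul_NESW_apply]
  rcases le_total k l with h | h
  · rw [min_eq_left (Fin.le_def.1 h), max_eq_right (Fin.le_def.1 h)]
    exact eq_sum_superdiag_of_le hadd h
  · rw [min_eq_right (Fin.le_def.1 h), max_eq_left (Fin.le_def.1 h), ← hsym.apply]
    exact eq_sum_superdiag_of_le hadd h

end LineAdditive

lemma superdiag_pos {n : ℕ} {C : Matrix (Fin n) (Fin n) ℝ} (hpos : ∀ i j, i ≠ j → 0 < C i j)
    {a : ℕ} (ha : a ∈ Icc 1 (n - 1)) : 0 < superdiag C a := by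
  rw [mem_Icc] at ha
  rw [superdiag, dif_pos (by omega)]
  exact hpos _ _ (by simp [Fin.ext_iff]; omega)

theorem metric_iff_interior_metric_face_general (n : ℕ)
    (C : Matrix (Fin n) (Fin n) ℝ) (hC : C ∈ HM n) :
    ((∀ i j k : Fin n, C i j ≤ C i k + C k j) ∧ (∀ i j : Fin n, i ≠ j → 0 < C i j)) ↔
      ∃ lam : ℕ → ℝ,
        (∀ a ∈ Finset.Icc 1 (n - 1), 0 < lam a) ∧
        (∑ a ∈ Finset.Icc 1 (n - 1), lam a) = 1 ∧
        C = ∑ a ∈ Finset.Icc 1 (n - 1),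
          lam a • ((1 / (2 * (a : ℝ) * ((n - a : ℕ) : ℝ))) • NESW n a (n - a)) := by
  obtain ⟨hsym, hdiag, -, hsum, hM⟩ := hC
  have hcut : ∀ a ∈ Icc 1 (n - 1), (0 : ℝ) < 2 * (a : ℝ) * ((n - a : ℕ) : ℝ) := fun a ha => by
    rw [mem_Icc] at ha
    have ha : (0 : ℝ) < a := by exact_mod_cast ha.1
    have hna : (0 : ℝ) < ((n - a : ℕ) : ℝ) := by exact_mod_cast (show 0 < n - a by omega)
    positivity
  constructor
  · rintro ⟨htri, hpos⟩
    have hC := eq_sum_superdiag_smul_NESW (fun i j k => hM.add_eq_of_triangle hdiag htri) hsym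
    refine ⟨fun a => superdiag C a * (2 * a * (n - a : ℕ)),
      fun a ha => mul_pos (superdiag_pos hpos ha) (hcut a ha), ?_, ?_⟩
    · rw [← hsum, ← sum_entries_sum_smul_NESW_s10, ← hC]
    · conv_lhs => rw [hC]
      refine sum_congr rfl fun a ha => ?_
      rw [smul_smul, mul_assoc, mul_one_div_cancel (hcut a ha).ne', mul_one]
  · rintro ⟨lam, hlam, -, rfl⟩
    simp only [smul_smul]
    have hv : ∀ a ∈ Icc 1 (n - 1), 0 < lam a * (1 / (2 * (a : ℝ) * ((n - a : ℕ) : ℝ))) :=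
      fun a ha => mul_pos (hlam a ha) (one_div_pos.2 (hcut a ha))
    exact ⟨sum_smul_NESW_triangle fun a ha => (hv a ha).le, fun i j => sum_smul_NESW_pos hv⟩

/-- A matrix in the hollow symmetric Monge polytope induces a true metric (triangle
inequality, and strictly positive off-diagonal entries) if and only if it is a convex
combination with *strictly positive* coefficients of the matrices
`(1/(2a(n-a))) • NESW (a × (n-a))` for `1 ≤ a ≤ n - 1`, i.e. iff it lies in the relative
interior of the metric face of `HM n`. -/
theorem metric_iff_interior_metric_face (n : ℕ) (hn : 2 ≤ n)
    (C : Matrix (Fin n) (Fin n) ℝ) (hC : C ∈ HM n) :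
    ((∀ i j k : Fin n, C i j ≤ C i k + C k j) ∧ (∀ i j : Fin n, i ≠ j → 0 < C i j)) ↔
      ∃ lam : ℕ → ℝ,
        (∀ a ∈ Finset.Icc 1 (n - 1), 0 < lam a) ∧
        (∑ a ∈ Finset.Icc 1 (n - 1), lam a) = 1 ∧
        C = ∑ a ∈ Finset.Icc 1 (n - 1),
          lam a • ((1 / (2 * (a : ℝ) * ((n - a : ℕ) : ℝ))) • NESW n a (n - a)) :=
  metric_iff_interior_metric_face_general n C hC
end

section
/- Fix an integer p ≥ 1. For each k ∈ ℕ, let M_{2×p}^k(ℕ) denote the set of 2×p matrices with entries in ℕ whose entries sum to k, and let MM_{2×p}^k(ℕ) be the subset of those that additionally have the Monge property. Then the limit as k → ∞ of the ratio #MM_{2×p}^k(ℕ) / #M_{2×p}^k(ℕ) equals 1/p!. (This ratio limit is the normalized volume of the Monge polytope M_{2×p} inside the probability simplex of 2×p matrices.) -/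
open Finset Filter

/-- The Monge property for a `2 × p` matrix with `ℕ` entries:
`c_{1,j} + c_{2,J} ≤ c_{1,J} + c_{2,j}` whenever `j < J` (rows are 0-based here). -/
def IsMonge2 {p : ℕ} (C : Matrix (Fin 2) (Fin p) ℕ) : Prop :=
  ∀ j J : Fin p, j < J → C 0 j + C 1 J ≤ C 0 J + C 1 j

/-- `Mk2 p k`: the `2 × p` matrices over `ℕ` whose entries sum to `k`. -/
def Mk2 (p k : ℕ) : Set (Matrix (Fin 2) (Fin p) ℕ) :=
  {C | (∑ i, ∑ j, C i j) = k}

/-- `MMk2 p k`: the Monge matrices in `Mk2 p k`. -/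
def MMk2 (p k : ℕ) : Set (Matrix (Fin 2) (Fin p) ℕ) :=
  {C | C ∈ Mk2 p k ∧ IsMonge2 C}

/-!
A `2 × p` matrix is Monge iff its column differences `c_{1,j} - c_{2,j}` are nondecreasing in `j`.
If these differences are pairwise distinct, exactly one of the `p!` column permutations of the
matrix is Monge, so among matrices of total `k` with distinct differences the Monge ones are
exactly a `1 / p!` fraction. Matrices with a tie between columns `j ≠ J` are negligible: column `J`
is then determined by its sum and the other columns, so there are at most `p²` times as many of
them as compositions of `k` into `2p - 1` parts, against `C(2p + k - 1, k)` compositions into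
`2p` parts counting all matrices, a ratio `O(1/k)`.
-/

open scoped Nat

lemma eq_sort_iff_monotone_of_injective {n : ℕ} {α : Type*} [LinearOrder α] {f : Fin n → α}
    (hf : Function.Injective f) {σ : Equiv.Perm (Fin n)} :
    σ = Tuple.sort f ↔ Monotone (f ∘ σ) := by
  rw [Tuple.eq_sort_iff]
  exact and_iff_left_of_imp fun _ i j hij hfij => absurd (σ.injective (hf hfij)) hij.ne

lemma finite_setOf_sum_eq (ι : Type*) [Fintype ι] (k : ℕ) :
    {f : ι → ℕ | ∑ i, f i = k}.Finite := by
  classical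
  exact Set.finite_coe_iff.1 (Finite.of_equiv _ (Sym.equivNatSumOfFintype ι k))

lemma ncard_setOf_sum_eq (ι : Type*) [Fintype ι] (k : ℕ) :
    {f : ι → ℕ | ∑ i, f i = k}.ncard = (Fintype.card ι + k - 1).choose k := by
  classical
  calc _ = Nat.card (Sym ι k) := Nat.card_congr (Sym.equivNatSumOfFintype ι k).symm
    _ = _ := by rw [Nat.card_eq_fintype_card, Sym.card_sym_eq_choose]

def colDiff {p : ℕ} (C : Matrix (Fin 2) (Fin p) ℕ) (j : Fin p) : ℤ := C 0 j - C 1 j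

def injColDiff (p : ℕ) : Set (Matrix (Fin 2) (Fin p) ℕ) := {C | Function.Injective (colDiff C)}

lemma isMonge2_iff_monotone_colDiff {p : ℕ} (C : Matrix (Fin 2) (Fin p) ℕ) :
    IsMonge2 C ↔ Monotone (colDiff C) := by
  rw [monotone_iff_forall_lt]
  refine forall₂_congr fun j J => imp_congr_right fun _ => ?_
  simp only [colDiff]
  omega

lemma Mk2_eq_image (p k : ℕ) :
    Mk2 p k =
      ((Equiv.curry _ _ _).trans Matrix.of) '' {f : Fin 2 × Fin p → ℕ | ∑ x, f x = k} := by
  rw [Equiv.image_eq_preimage_symm]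
  ext C
  simp [Mk2, Fintype.sum_prod_type]

lemma finite_Mk2 (p k : ℕ) : (Mk2 p k).Finite := by
  rw [Mk2_eq_image]
  exact (finite_setOf_sum_eq _ k).image _

lemma ncard_Mk2 (p k : ℕ) : (Mk2 p k).ncard = (2 * p + k - 1).choose k := by
  rw [Mk2_eq_image, Set.ncard_image_of_injective _ (Equiv.injective _), ncard_setOf_sum_eq,
    Fintype.card_prod, Fintype.card_fin, Fintype.card_fin]

lemma submatrix_mem_Mk2 {p k : ℕ} {C : Matrix (Fin 2) (Fin p) ℕ} (hC : C ∈ Mk2 p k)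
    (σ : Equiv.Perm (Fin p)) : C.submatrix id σ ∈ Mk2 p k := by
  simpa only [Mk2, Set.mem_ofPred_eq, Matrix.submatrix_apply, id, Equiv.sum_comp] using hC

noncomputable def sortColumnsEquiv (p k : ℕ) :
    Equiv.Perm (Fin p) × ↥(MMk2 p k ∩ injColDiff p) ≃ ↥(Mk2 p k ∩ injColDiff p) where
  toFun x := ⟨x.2.1.submatrix id x.1.symm, submatrix_mem_Mk2 x.2.2.1.1 _,
    x.2.2.2.comp (Equiv.injective _)⟩
  invFun C := (Tuple.sort (colDiff C.1), ⟨C.1.submatrix id (Tuple.sort (colDiff C.1)),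
    ⟨submatrix_mem_Mk2 C.2.1 _,
      (isMonge2_iff_monotone_colDiff _).2 (Tuple.monotone_sort (colDiff C.1))⟩,
    C.2.2.comp (Equiv.injective _)⟩)
  left_inv := by
    rintro ⟨σ, C, ⟨-, hMonge⟩, hinj⟩
    have hσ : Tuple.sort (colDiff (C.submatrix id σ.symm)) = σ := by
      refine ((eq_sort_iff_monotone_of_injective (hinj.comp (Equiv.injective _))).2 ?_).symm
      convert (isMonge2_iff_monotone_colDiff C).1 hMonge using 1
      ext j
      simp [colDiff]
    refine Prod.ext hσ (Subtype.ext ?_)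
    ext i j
    simp [hσ]
  right_inv C := by
    ext i j
    simp

lemma ncard_Mk2_inter_injColDiff (p k : ℕ) :
    (Mk2 p k ∩ injColDiff p).ncard = p ! * (MMk2 p k ∩ injColDiff p).ncard := by
  rw [← Nat.card_coe_set_eq, ← Nat.card_congr (sortColumnsEquiv p k), Nat.card_prod,
    Nat.card_perm, Nat.card_fin, Nat.card_coe_set_eq]

def mergeColumn {p : ℕ} (J : Fin p) (C : Matrix (Fin 2) (Fin p) ℕ) :
    Option (Fin 2 × {x // x ≠ J}) → ℕ :=
  fun o => o.elim (C 0 J + C 1 J) fun x => C x.1 x.2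

lemma sum_mergeColumn {p : ℕ} (J : Fin p) (C : Matrix (Fin 2) (Fin p) ℕ) :
    ∑ o, mergeColumn J C o = ∑ i, ∑ j, C i j := by
  simp only [mergeColumn, Fintype.sum_option, Option.elim, Fintype.sum_prod_type,
    Fintype.sum_eq_add_sum_subtype_ne _ J, Fin.sum_univ_two]
  ring

lemma injOn_mergeColumn {p : ℕ} {j J : Fin p} (hjJ : j ≠ J) :
    Set.InjOn (mergeColumn J) {C | colDiff C j = colDiff C J} := by
  intro C hC C' hC' h
  have hoff : ∀ i x, x ≠ J → C i x = C' i x := fun i x hx =>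
    congr_fun h (some (i, ⟨x, hx⟩))
  have hsum : C 0 J + C 1 J = C' 0 J + C' 1 J := congr_fun h none
  have h0 := hoff 0 j hjJ
  have h1 := hoff 1 j hjJ
  simp only [Set.mem_ofPred_eq, colDiff] at hC hC'
  ext i x
  by_cases hx : x = J
  · subst hx
    have h0 : C 0 x = C' 0 x := by omega
    have h1 : C 1 x = C' 1 x := by omega
    fin_cases i
    exacts [h0, h1]
  · exact hoff i x hx

lemma ncard_Mk2_diff_injColDiff_le (p k : ℕ) :
    (Mk2 p k \ injColDiff p).ncard ≤ p ^ 2 * (2 * p + k - 2).choose k := by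
  set tie : Fin p × Fin p → Set (Matrix (Fin 2) (Fin p) ℕ) := fun jJ =>
    {C ∈ Mk2 p k | jJ.1 ≠ jJ.2 ∧ colDiff C jJ.1 = colDiff C jJ.2}
  have hcover : Mk2 p k \ injColDiff p ⊆ ⋃ jJ, tie jJ := by
    rintro C ⟨hC, hinj⟩
    obtain ⟨j, J, hjJ, hne⟩ := Function.not_injective_iff.1 hinj
    exact Set.mem_iUnion.2 ⟨(j, J), hC, hne, hjJ⟩
  have htie : ∀ jJ, (tie jJ).ncard ≤ (2 * p + k - 2).choose k := by
    rintro ⟨j, J⟩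
    by_cases hjJ : j = J
    · simp [tie, hjJ]
    calc (tie (j, J)).ncard
        ≤ {f : Option (Fin 2 × {x // x ≠ J}) → ℕ | ∑ o, f o = k}.ncard :=
          Set.ncard_le_ncard_of_injOn (mergeColumn J)
            (fun C hC => (sum_mergeColumn J C).trans hC.1)
            ((injOn_mergeColumn hjJ).mono fun C hC => hC.2.2) (finite_setOf_sum_eq _ k)
      _ = (2 * p + k - 2).choose k := by
        rw [ncard_setOf_sum_eq]
        simp only [Fintype.card_option, Fintype.card_prod, Fintype.card_fin,
          Fintype.card_subtype_compl, Fintype.card_subtype_eq]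
        congr 1
        have := J.pos
        omega
  calc (Mk2 p k \ injColDiff p).ncard ≤ (⋃ jJ, tie jJ).ncard :=
        Set.ncard_le_ncard hcover
          (Set.finite_iUnion fun _ => (finite_Mk2 p k).subset fun _ h => h.1)
    _ ≤ ∑ jJ, (tie jJ).ncard := Set.ncard_iUnion_le_of_fintype tie
    _ ≤ ∑ _jJ : Fin p × Fin p, (2 * p + k - 2).choose k :=
        Finset.sum_le_sum fun jJ _ => htie jJ
    _ = p ^ 2 * (2 * p + k - 2).choose k := by simp [sq]

lemma ncard_Mk2_diff_injColDiff_mul_le {p : ℕ} (hp : 1 ≤ p) (k : ℕ) :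
    (Mk2 p k \ injColDiff p).ncard * (k + 1) ≤ p ^ 2 * (2 * p - 1) * (Mk2 p k).ncard := by
  have hchoose := Nat.choose_mul_succ_eq (2 * p + k - 2) k
  rw [show 2 * p + k - 2 + 1 = 2 * p + k - 1 by omega,
    show 2 * p + k - 1 - k = 2 * p - 1 by omega] at hchoose
  calc (Mk2 p k \ injColDiff p).ncard * (k + 1)
      ≤ p ^ 2 * (2 * p + k - 2).choose k * (2 * p + k - 1) :=
        Nat.mul_le_mul (ncard_Mk2_diff_injColDiff_le p k) (by omega)
    _ = p ^ 2 * (2 * p - 1) * (Mk2 p k).ncard := by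
        rw [ncard_Mk2, mul_assoc, hchoose]
        ring

lemma abs_factorial_mul_ncard_MMk2_sub_ncard_Mk2_le (p k : ℕ) :
    |(p ! * (MMk2 p k).ncard : ℝ) - (Mk2 p k).ncard| ≤
      p ! * (Mk2 p k \ injColDiff p).ncard := by
  have hM := Set.ncard_inter_add_ncard_sdiff_eq_ncard (Mk2 p k) (injColDiff p) (finite_Mk2 p k)
  have hMM := Set.ncard_inter_add_ncard_sdiff_eq_ncard (MMk2 p k) (injColDiff p)
    ((finite_Mk2 p k).subset fun _ h => h.1)
  have hties : (MMk2 p k \ injColDiff p).ncard ≤ (Mk2 p k \ injColDiff p).ncard :=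
    Set.ncard_le_ncard (Set.sdiff_subset_sdiff_left fun _ h => h.1) ((finite_Mk2 p k).sdiff)
  have hgen := ncard_Mk2_inter_injColDiff p k
  have hfac : (1 : ℝ) ≤ p ! := by exact_mod_cast p.factorial_pos
  have hties' :
      (p ! * (MMk2 p k \ injColDiff p).ncard : ℝ) ≤ p ! * (Mk2 p k \ injColDiff p).ncard :=
    mul_le_mul_of_nonneg_left (by exact_mod_cast hties) (by positivity)
  rw [← hM, ← hMM, hgen, abs_le]
  push_cast
  constructor <;> nlinarith

lemma abs_ncard_MMk2_div_ncard_Mk2_sub_le {p : ℕ} (hp : 1 ≤ p) (k : ℕ) :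
    |((MMk2 p k).ncard : ℝ) / (Mk2 p k).ncard - 1 / p !| ≤
      (p ^ 2 * (2 * p - 1) : ℕ) / (k + 1) := by
  have hM : (0 : ℝ) < (Mk2 p k).ncard := by
    rw [ncard_Mk2]; exact_mod_cast Nat.choose_pos (by omega)
  have hfac : (0 : ℝ) < p ! := by exact_mod_cast p.factorial_pos
  calc |((MMk2 p k).ncard : ℝ) / (Mk2 p k).ncard - 1 / p !|
      = |(p ! * (MMk2 p k).ncard : ℝ) - (Mk2 p k).ncard| / (p ! * (Mk2 p k).ncard) := by
        rw [← abs_of_pos (mul_pos hfac hM), ← abs_div]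
        congr 1
        field_simp
    _ ≤ p ! * (Mk2 p k \ injColDiff p).ncard / (p ! * (Mk2 p k).ncard) := by
        gcongr
        exact abs_factorial_mul_ncard_MMk2_sub_ncard_Mk2_le p k
    _ = (Mk2 p k \ injColDiff p).ncard / (Mk2 p k).ncard := mul_div_mul_left _ _ hfac.ne'
    _ ≤ (p ^ 2 * (2 * p - 1) : ℕ) / (k + 1) := by
        rw [div_le_div_iff₀ hM (by positivity)]
        exact_mod_cast ncard_Mk2_diff_injColDiff_mul_le hp k

/-- The normalized volume of the two-row Monge polytope:
`#MM_{2×p}^k(ℕ) / #M_{2×p}^k(ℕ) → 1 / p!` as `k → ∞`. -/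
theorem two_row_monge_normalized_volume (p : ℕ) (hp : 1 ≤ p) :
    Tendsto (fun k : ℕ => ((MMk2 p k).ncard : ℝ) / ((Mk2 p k).ncard : ℝ))
      atTop (nhds (1 / (Nat.factorial p : ℝ))) := by
  rw [tendsto_iff_norm_sub_tendsto_zero]
  refine squeeze_zero (fun _ => norm_nonneg _) (abs_ncard_MMk2_div_ncard_Mk2_sub_le hp) ?_
  simpa only [mul_zero, mul_one_div] using
    (tendsto_one_div_add_atTop_nhds_zero_nat (𝕜 := ℝ)).const_mul
      ((p ^ 2 * (2 * p - 1) : ℕ) : ℝ)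
end

section
/- Let p_1, …, p_m be positive integers (m ≥ 1) and let D(t) = Π_{i=1}^m (1 − t^{p_i}). Let N(t) be a real polynomial with deg N < deg D and N(1) ≠ 0, and assume that every complex root β ≠ 1 of D has multiplicity strictly less than m (the multiplicity of the root 1). Define f_k to be the k-th coefficient of the formal power series expansion of N(t)/D(t). Then the limit as k → ∞ of f_k / k^{m−1} equals N(1) / ((m−1)! · Π_{i=1}^m p_i). -/
open Finset Filter Polynomial

/-!
Over `ℂ`, `D = (1 - X)^m Q` with `Q = ∏ᵢ (1 + X + ⋯ + X^(pᵢ - 1))`, so `Q(1) = ∏ᵢ pᵢ`, every root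
of `Q` lies on the unit circle and, by hypothesis, has multiplicity `< m`. Writing
`N = (N(1)/Q(1)) Q + (X - 1) W` gives `N/D = (N(1)/Q(1)) (1 - X)^(-m) - W/((1 - X)^(m-1) Q)`.
The coefficients of the first term are
`N(1)/Q(1) · C(m - 1 + k, m - 1) ~ N(1) k^(m-1)/((m-1)! Q(1))`.
In the partial fraction expansion of the second term every summand is `a (X - β)^(-(j+1))` with
`‖β‖ ≥ 1` and `j < m - 1`, and its coefficients are `O(k^j) = o(k^(m-1))`.
-/

open Asymptotics Topology
open scoped Nat
open scoped PowerSeries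

theorem tendsto_choose_add_div_pow (d : ℕ) :
    Tendsto (fun k : ℕ => ((d + k).choose d : ℝ) / (k : ℝ) ^ d) atTop (𝓝 (d ! : ℝ)⁻¹) := by
  have hupper : Tendsto (fun k : ℕ => (1 + (d : ℝ) / k) ^ d / d !) atTop (𝓝 (d ! : ℝ)⁻¹) := by
    simpa using (((tendsto_const_div_atTop_nhds_zero_nat (d : ℝ)).const_add 1).pow d).div_const
      (d ! : ℝ)
  refine tendsto_of_tendsto_of_tendsto_of_le_of_le' tendsto_const_nhds hupper ?_ ?_ <;>
    filter_upwards [eventually_gt_atTop 0] with k hk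
  · have hlow := Nat.pow_le_choose (α := ℝ) d (d + k)
    rw [show d + k + 1 - d = k + 1 by omega] at hlow
    rw [inv_eq_one_div, div_le_div_iff₀ (by positivity) (by positivity), one_mul]
    calc (k : ℝ) ^ d ≤ ((k + 1 : ℕ) : ℝ) ^ d := by gcongr; simp
      _ ≤ _ := by rwa [div_le_iff₀ (by positivity)] at hlow
  · have hup := Nat.choose_le_pow_div (α := ℝ) d (d + k)
    have hk' : (k : ℝ) ≠ 0 := by positivity
    calc ((d + k).choose d : ℝ) / (k : ℝ) ^ d ≤ ((d + k : ℕ) : ℝ) ^ d / d ! / (k : ℝ) ^ d := by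
          gcongr
      _ = (1 + (d : ℝ) / k) ^ d / d ! := by
          rw [one_add_div hk', div_pow]; push_cast; ring

theorem isLittleO_add_one_pow_natCast_pow {𝕜 : Type*} [RCLike 𝕜] {j e : ℕ} (hje : j < e) :
    (fun k : ℕ => ((k : ℝ) + 1) ^ j) =o[atTop] fun k : ℕ => (k : 𝕜) ^ e := by
  have hshift : (fun k : ℕ => ((k : ℝ) + 1) ^ j) =o[atTop] fun k : ℕ => ((k : ℝ) + 1) ^ e :=
    (isLittleO_pow_pow_atTop_of_lt hje).comp_tendsto
      (tendsto_atTop_add_const_right _ 1 tendsto_natCast_atTop_atTop)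
  refine hshift.trans_isBigO (IsBigO.of_bound (2 ^ e) ?_)
  filter_upwards [eventually_ge_atTop 1] with k hk
  have hk' : (1 : ℝ) ≤ k := by exact_mod_cast hk
  rw [norm_pow, norm_pow, RCLike.norm_natCast, Real.norm_of_nonneg (by positivity), ← mul_pow]
  gcongr
  linarith

theorem Polynomial.one_sub_X_ne_zero {R : Type*} [Ring R] [Nontrivial R] : (1 - X : R[X]) ≠ 0 :=
  fun h => by simpa using congrArg (eval 0) h

theorem Polynomial.prod_one_sub_X_pow {R ι : Type*} [CommRing R] (s : Finset ι) (p : ι → ℕ) :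
    ∏ i ∈ s, (1 - X ^ p i : R[X]) = (1 - X) ^ #s * ∏ i ∈ s, ∑ j ∈ range (p i), X ^ j := by
  simp [← mul_neg_geom_sum, prod_mul_distrib]

theorem Polynomial.rootMultiplicity_one_sub_X_pow {R : Type*} [CommRing R] [IsDomain R]
    [DecidableEq R] (β : R) (d : ℕ) :
    ((1 - X : R[X]) ^ d).rootMultiplicity β = if β = 1 then d else 0 := by
  have h : (1 - X : R[X]) ^ d = C ((-1) ^ d) * (X - C 1) ^ d := by
    rw [map_pow, ← mul_pow, map_neg, map_one]; ring
  rw [h, rootMultiplicity_mul (mul_ne_zero (by simp) (pow_ne_zero _ (X_sub_C_ne_zero 1))),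
    rootMultiplicity_C, zero_add]
  split_ifs with hβ
  · rw [hβ, rootMultiplicity_X_sub_C_pow]
  · exact rootMultiplicity_eq_zero (by simp [sub_eq_zero, hβ])

theorem Complex.norm_eq_one_of_isRoot_prod_geom_sum {ι : Type*} {s : Finset ι} {p : ι → ℕ}
    (hp : ∀ i ∈ s, p i ≠ 0) {β : ℂ} (hβ : (∏ i ∈ s, ∑ j ∈ range (p i), X ^ j : ℂ[X]).IsRoot β) :
    ‖β‖ = 1 := by
  obtain ⟨i, hi, hsum⟩ := prod_eq_zero_iff.mp (by simpa [eval_prod, eval_finsetSum] using hβ)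
  have hgeom := mul_neg_geom_sum β (p i)
  rw [hsum, mul_zero, eq_comm, sub_eq_zero, eq_comm] at hgeom
  exact Complex.norm_eq_one_of_pow_eq_one hgeom (hp i hi)

namespace PowerSeries

theorem map_inv {k K : Type*} [Field k] [Field K] (f : k →+* K) (F : k⟦X⟧) :
    map f F⁻¹ = (map f F)⁻¹ := by
  by_cases h : constantCoeff F = 0
  · rw [inv_eq_zero.mpr h, map_zero, eq_comm, inv_eq_zero]
    exact (congrArg f h).trans (map_zero f)
  · rw [PowerSeries.eq_inv_iff_mul_eq_one ((map_ne_zero f).mpr h), ← map_mul,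
      PowerSeries.inv_mul_cancel _ h, map_one]

theorem coeff_map_mul_inv {k K : Type*} [Field k] [Field K] (f : k →+* K) (N D : k[X]) (n : ℕ) :
    coeff n (((N.map f : K[X]) : K⟦X⟧) * ((D.map f : K[X]) : K⟦X⟧)⁻¹) =
      f (coeff n ((N : k⟦X⟧) * (D : k⟦X⟧)⁻¹)) := by
  rw [polynomial_map_coe, polynomial_map_coe, ← map_inv, ← map_mul, coeff_map]

theorem coeff_inv_one_sub_X_pow {k : Type*} [Field k] (d n : ℕ) :
    coeff n (((1 - X : k⟦X⟧) ^ (d + 1))⁻¹) = (d + n).choose d := by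
  rw [PowerSeries.inv_eq_iff_mul_eq_one (by simp) |>.mpr (mk_add_choose_mul_one_sub_pow_eq_one k d),
    coeff_mk]

theorem coeff_inv_X_sub_C {k : Type*} [Field k] {β : k} (hβ : β ≠ 0) (n : ℕ) :
    coeff n ((X - C β : k⟦X⟧)⁻¹) = -(β ^ (n + 1))⁻¹ := by
  have h := invUnitsSub_mul_sub (Units.mk0 β hβ)
  rw [Units.val_mk0] at h
  have hinv : (X - C β : k⟦X⟧)⁻¹ = -invUnitsSub (Units.mk0 β hβ) := by
    rw [PowerSeries.inv_eq_iff_mul_eq_one (by simp [hβ]), ← h]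
    ring
  simp [hinv, coeff_invUnitsSub, divp]

theorem inv_X_sub_C_mul_coe {K : Type*} [Field K] {β : K} (hβ : β ≠ 0) :
    (X - C β)⁻¹ * ((Polynomial.X - Polynomial.C β : K[X]) : K⟦X⟧) = 1 := by
  rw [Polynomial.coe_sub, Polynomial.coe_X, Polynomial.coe_C]
  exact PowerSeries.inv_mul_cancel _ (by simpa using hβ)

theorem norm_coeff_pow_succ_le {R : Type*} [NormedRing R] {F : R⟦X⟧}
    (hF : ∀ n, ‖coeff n F‖ ≤ 1) (j k : ℕ) : ‖coeff k (F ^ (j + 1))‖ ≤ ((k : ℝ) + 1) ^ j := by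
  induction j generalizing k with
  | zero => simpa using hF k
  | succ j ih =>
    rw [pow_succ, coeff_mul]
    calc ‖∑ x ∈ antidiagonal k, coeff x.1 (F ^ (j + 1)) * coeff x.2 F‖
        ≤ ∑ x ∈ antidiagonal k, ((k : ℝ) + 1) ^ j := by
          refine (norm_sum_le _ _).trans (sum_le_sum fun x hx => ?_)
          have hx1 : (x.1 : ℝ) ≤ k := by
            have := mem_antidiagonal.mp hx
            exact_mod_cast (by omega : x.1 ≤ k)
          calc ‖coeff x.1 (F ^ (j + 1)) * coeff x.2 F‖
              ≤ ‖coeff x.1 (F ^ (j + 1))‖ * ‖coeff x.2 F‖ := norm_mul_le _ _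
            _ ≤ ((x.1 : ℝ) + 1) ^ j * 1 :=
                mul_le_mul (ih x.1) (hF x.2) (norm_nonneg _) (by positivity)
            _ ≤ ((k : ℝ) + 1) ^ j := by rw [mul_one]; gcongr
      _ = ((k : ℝ) + 1) ^ (j + 1) := by simp [pow_succ, mul_comm]

theorem isLittleO_coeff_C_mul_inv_X_sub_C_pow {𝕜 : Type*} [RCLike 𝕜] {β : 𝕜} (hβ : 1 ≤ ‖β‖)
    (a : 𝕜) {j e : ℕ} (hje : j < e) :
    (fun k => coeff k (C a * (X - C β : 𝕜⟦X⟧)⁻¹ ^ (j + 1))) =o[atTop]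
      fun k : ℕ => (k : 𝕜) ^ e := by
  have hβ0 : β ≠ 0 := norm_pos_iff.mp (one_pos.trans_le hβ)
  have hcoeff (n : ℕ) : ‖coeff n (X - C β : 𝕜⟦X⟧)⁻¹‖ ≤ 1 := by
    rw [coeff_inv_X_sub_C hβ0, norm_neg, norm_inv, norm_pow]
    exact inv_le_one_of_one_le₀ (one_le_pow₀ hβ)
  simp only [coeff_C_mul]
  refine IsLittleO.const_mul_left ?_ a
  exact (IsBigO.of_bound 1 (.of_forall fun k => by
    simpa [Real.norm_of_nonneg (by positivity : (0 : ℝ) ≤ ((k : ℝ) + 1) ^ j)] using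
      norm_coeff_pow_succ_le hcoeff j k)).trans_isLittleO (isLittleO_add_one_pow_natCast_pow hje)

theorem coe_inv_eq_C_mul_prod_inv_X_sub_C_pow {K : Type*} [Field K] [IsAlgClosed K]
    [DecidableEq K] {Q : K[X]} (hQ0 : Q.eval 0 ≠ 0) :
    (Q : K⟦X⟧)⁻¹ = C Q.leadingCoeff⁻¹ *
      ∏ β ∈ Q.roots.toFinset, (X - C β)⁻¹ ^ Q.rootMultiplicity β := by
  have hQ : Q ≠ 0 := fun h => hQ0 (by simp [h])
  set c := Q.leadingCoeff
  have hfac : Polynomial.C c * ∏ β ∈ Q.roots.toFinset,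
      (Polynomial.X - Polynomial.C β) ^ Q.rootMultiplicity β = Q := by
    rw [← prod_multiset_root_eq_finset_root]
    exact C_leadingCoeff_mul_prod_multiset_X_sub_C (splits_iff_card_roots.mp (IsAlgClosed.splits Q))
  have hcoe : (Q : K⟦X⟧) = C c * ∏ β ∈ Q.roots.toFinset,
      ((Polynomial.X - Polynomial.C β : K[X]) : K⟦X⟧) ^ Q.rootMultiplicity β := by
    conv_lhs => rw [← hfac]
    rw [Polynomial.coe_mul, Polynomial.coe_C, ← Polynomial.coeToPowerSeries.ringHom_apply, map_prod]
    simp only [map_pow, Polynomial.coeToPowerSeries.ringHom_apply]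
  rw [PowerSeries.inv_eq_iff_mul_eq_one (by simpa [coeff_zero_eq_eval_zero] using hQ0), hcoe,
    mul_mul_mul_comm, ← map_mul, inv_mul_cancel₀ (leadingCoeff_ne_zero.mpr hQ), map_one, one_mul,
    ← prod_mul_distrib]
  refine prod_eq_one fun β hβ => ?_
  have hβ0 : β ≠ 0 := by
    rintro rfl
    exact hQ0 (isRoot_of_mem_roots (Multiset.mem_toFinset.mp hβ))
  rw [← mul_pow, inv_X_sub_C_mul_coe hβ0, one_pow]

theorem coe_mul_inv_one_sub_X_pow_succ_mul {K : Type*} [Field K] {Q : K[X]} (hQ0 : Q.eval 0 ≠ 0)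
    (L : K) (W : K[X]) (d : ℕ) :
    ((Polynomial.C L * Q + (Polynomial.X - Polynomial.C 1) * W : K[X]) : K⟦X⟧) *
        (((1 - Polynomial.X) ^ (d + 1) * Q : K[X]) : K⟦X⟧)⁻¹ =
      C L * ((1 - X) ^ (d + 1))⁻¹ -
        (W : K⟦X⟧) * (((1 - Polynomial.X) ^ d * Q : K[X]) : K⟦X⟧)⁻¹ := by
  have hA := PowerSeries.inv_mul_cancel ((1 - X : K⟦X⟧) ^ (d + 1)) (by simp)
  have hB := PowerSeries.inv_mul_cancel (((1 - Polynomial.X) ^ d * Q : K[X]) : K⟦X⟧)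
    (by simpa [coeff_zero_eq_eval_zero] using hQ0)
  rw [eq_comm, PowerSeries.eq_mul_inv_iff_mul_eq (by simpa [coeff_zero_eq_eval_zero] using hQ0)]
  simp only [Polynomial.coe_add, Polynomial.coe_mul, Polynomial.coe_pow, Polynomial.coe_sub,
    Polynomial.coe_one, Polynomial.coe_X, Polynomial.coe_C, map_one] at hB ⊢
  linear_combination (C L * (Q : K⟦X⟧)) * hA - ((1 - X) * (W : K⟦X⟧)) * hB

end PowerSeries

theorem isLittleO_coeff_mul_inv {Q : ℂ[X]} {e : ℕ}
    (hroot : ∀ β, Q.IsRoot β → 1 ≤ ‖β‖) (hmult : ∀ β, Q.rootMultiplicity β ≤ e) (P : ℂ[X]) :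
    (fun k => PowerSeries.coeff k ((P : ℂ⟦X⟧) * (Q : ℂ⟦X⟧)⁻¹)) =o[atTop]
      fun k : ℕ => (k : ℂ) ^ e := by
  set s := Q.roots.toFinset
  set gi : ℂ → ℂ⟦X⟧ := fun β => (PowerSeries.X - PowerSeries.C β)⁻¹
  have hs (β) (hβ : β ∈ s) : 1 ≤ ‖β‖ := hroot β (isRoot_of_mem_roots (Multiset.mem_toFinset.mp hβ))
  have hgi : ∀ β ∈ s, gi β * algebraMap ℂ[X] ℂ⟦X⟧ (X - C β) = 1 := fun β hβ =>
    PowerSeries.inv_X_sub_C_mul_coe (norm_pos_iff.mp (one_pos.trans_le (hs β hβ)))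
  obtain ⟨q, r, hr, hPr⟩ := mul_prod_pow_inverse_eq_quo_add_sum_rem_mul_pow_inverse P
    (fun β _ => monic_X_sub_C β)
    (fun β _ γ _ hβγ => isCoprime_X_sub_C_of_isUnit_sub (sub_ne_zero.mpr hβγ).isUnit)
    (Q.rootMultiplicity ·) hgi
  have hconst : ∀ β ∈ s, ∀ j, r β j = C ((r β j).coeff 0) := fun β hβ j =>
    eq_C_of_degree_le_zero (Nat.WithBot.lt_one_iff_le_zero.mp (by simpa using hr β hβ j))
  have hq : (fun k => PowerSeries.coeff k (q : ℂ⟦X⟧)) =o[atTop] fun k : ℕ => (k : ℂ) ^ e :=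
    (isLittleO_zero _ _).congr' (by
      filter_upwards [eventually_gt_atTop q.natDegree] with k hk
      rw [coeff_coe, coeff_eq_zero_of_natDegree_lt hk]) EventuallyEq.rfl
  have hsum : ∀ β ∈ s, ∀ j : Fin (Q.rootMultiplicity β), (fun k => PowerSeries.coeff k
      (algebraMap ℂ[X] ℂ⟦X⟧ (r β j) * gi β ^ (j.1 + 1))) =o[atTop] fun k : ℕ => (k : ℂ) ^ e :=
    fun β hβ j => by
      rw [hconst β hβ j, show algebraMap ℂ[X] ℂ⟦X⟧ (C ((r β j).coeff 0)) =
        PowerSeries.C ((r β j).coeff 0) from coe_C _]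
      exact PowerSeries.isLittleO_coeff_C_mul_inv_X_sub_C_pow (hs β hβ) _
        (j.2.trans_le (hmult β))
  have hdecomp : (P : ℂ⟦X⟧) * (Q : ℂ⟦X⟧)⁻¹ = PowerSeries.C Q.leadingCoeff⁻¹ *
      (q + ∑ β ∈ s, ∑ j, algebraMap ℂ[X] ℂ⟦X⟧ (r β j) * gi β ^ (j.1 + 1)) := by
    rw [PowerSeries.coe_inv_eq_C_mul_prod_inv_X_sub_C_pow fun h => absurd (hroot 0 h) (by simp),
      mul_left_comm]
    exact congrArg _ hPr
  simp only [hdecomp, PowerSeries.coeff_C_mul, map_add, map_sum]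
  refine (hq.add ?_).const_mul_left _
  exact IsLittleO.fun_sum fun β hβ => IsLittleO.fun_sum fun j _ => hsum β hβ j

theorem tendsto_coeff_mul_inv_div_pow {d : ℕ} {Q : ℂ[X]} (hQ1 : Q.eval 1 ≠ 0)
    (hroot : ∀ β, Q.IsRoot β → 1 ≤ ‖β‖) (hmult : ∀ β, Q.rootMultiplicity β ≤ d) (N : ℂ[X]) :
    Tendsto (fun k : ℕ => PowerSeries.coeff k
        ((N : ℂ⟦X⟧) * (((1 - X) ^ (d + 1) * Q : ℂ[X]) : ℂ⟦X⟧)⁻¹) / (k : ℂ) ^ d)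
      atTop (𝓝 (N.eval 1 / (d ! * Q.eval 1))) := by
  set L := N.eval 1 / Q.eval 1
  obtain ⟨W, hW⟩ : X - C 1 ∣ N - C L * Q := dvd_iff_isRoot.mpr (by simp [L, hQ1])
  have hQ : Q ≠ 0 := fun h => hQ1 (by simp [h])
  set D' := (1 - X) ^ d * Q
  have hD' : D' ≠ 0 := mul_ne_zero (pow_ne_zero _ one_sub_X_ne_zero) hQ
  have hD'root (β : ℂ) (hβ : D'.IsRoot β) : 1 ≤ ‖β‖ := by
    simp only [D', IsRoot.def, eval_mul, eval_pow, eval_sub, eval_one, eval_X, _root_.mul_eq_zero,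
      pow_eq_zero_iff', sub_eq_zero] at hβ
    rcases hβ with ⟨rfl, -⟩ | h
    · simp
    · exact hroot β h
  have hD'mult (β : ℂ) : D'.rootMultiplicity β ≤ d := by
    rw [rootMultiplicity_mul hD', rootMultiplicity_one_sub_X_pow]
    split_ifs with hβ
    · simp [hβ, rootMultiplicity_eq_zero hQ1]
    · simpa using hmult β
  have hmain : Tendsto (fun k : ℕ => L * ((d + k).choose d : ℂ) / (k : ℂ) ^ d) atTop
      (𝓝 (L * (d ! : ℂ)⁻¹)) := by
    have := ((Complex.continuous_ofReal.tendsto _).comp (tendsto_choose_add_div_pow d)).const_mul L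
    simpa [mul_div_assoc] using this
  have hrest := (isLittleO_coeff_mul_inv hD'root hD'mult W).tendsto_div_nhds_zero
  convert hmain.sub hrest using 1
  · ext k
    rw [eq_add_of_sub_eq' hW, PowerSeries.coe_mul_inv_one_sub_X_pow_succ_mul
      (fun h => absurd (hroot 0 h) (by simp)), map_sub, PowerSeries.coeff_C_mul,
      PowerSeries.coeff_inv_one_sub_X_pow, sub_div]
  · rw [sub_zero, div_mul_eq_div_div_swap, div_eq_mul_inv]

theorem rational_generating_function_asymptotic_general
    (m : ℕ) (hm : 1 ≤ m) (p : Fin m → ℕ) (hp : ∀ i, 0 < p i)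
    (N D : Polynomial ℝ)
    (hD : D = ∏ i, (1 - Polynomial.X ^ p i))
    (hroots : ∀ β : ℂ, β ≠ 1 → (D.map (algebraMap ℝ ℂ)).rootMultiplicity β < m) :
    Tendsto
      (fun k : ℕ =>
        (PowerSeries.coeff (R := ℝ) k
          ((N : PowerSeries ℝ) * (D : PowerSeries ℝ)⁻¹)) / (k : ℝ) ^ (m - 1))
      atTop
      (nhds (N.eval 1 / ((Nat.factorial (m - 1) : ℝ) * ∏ i, (p i : ℝ)))) := by
  obtain ⟨d, rfl⟩ : ∃ d, m = d + 1 := ⟨m - 1, by omega⟩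
  set Q : ℂ[X] := ∏ i, ∑ j ∈ range (p i), X ^ j
  have hDQ : D.map (algebraMap ℝ ℂ) = (1 - X) ^ (d + 1) * Q := by
    simpa [hD, Polynomial.map_prod] using prod_one_sub_X_pow (R := ℂ) univ p
  have hQ1 : Q.eval 1 = ∏ i, (p i : ℂ) := by simp [Q, eval_prod, eval_finsetSum]
  have hQ1ne : Q.eval 1 ≠ 0 := hQ1 ▸ prod_ne_zero_iff.mpr fun i _ => by exact_mod_cast (hp i).ne'
  have hQmult (β : ℂ) : Q.rootMultiplicity β ≤ d := by
    rcases eq_or_ne β 1 with rfl | hβ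
    · simp [rootMultiplicity_eq_zero hQ1ne]
    · have hDne : D.map (algebraMap ℝ ℂ) ≠ 0 :=
        hDQ ▸ mul_ne_zero (pow_ne_zero _ one_sub_X_ne_zero) fun h => hQ1ne (by simp [h])
      have := rootMultiplicity_le_rootMultiplicity_of_dvd hDne (hDQ ▸ dvd_mul_left _ _) β
      have := hroots β hβ
      omega
  have key := tendsto_coeff_mul_inv_div_pow hQ1ne
    (fun β hβ => (Complex.norm_eq_one_of_isRoot_prod_geom_sum (fun i _ => (hp i).ne') hβ).ge) hQmult
    (N.map (algebraMap ℝ ℂ))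
  rw [← hDQ, eval_one_map, hQ1] at key
  rw [add_tsub_cancel_right, ← tendsto_ofReal_iff]
  convert key using 2 <;> push_cast
  · rw [PowerSeries.coeff_map_mul_inv]; rfl
  · rfl

/-- Asymptotics of the coefficients of a rational generating function `N(t)/D(t)` with
`D(t) = ∏ᵢ (1 - t^{pᵢ})`: if `deg N < deg D`, `N(1) ≠ 0`, and every complex root
`β ≠ 1` of `D` has multiplicity `< m`, then the coefficients `f_k` of the formal power
series expansion of `N/D` satisfy `f_k / k^{m-1} → N(1) / ((m-1)! · ∏ᵢ pᵢ)`. -/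
theorem rational_generating_function_asymptotic
    (m : ℕ) (hm : 1 ≤ m) (p : Fin m → ℕ) (hp : ∀ i, 0 < p i)
    (N D : Polynomial ℝ)
    (hD : D = ∏ i, (1 - Polynomial.X ^ p i))
    (hdeg : N.degree < D.degree)
    (hN1 : N.eval 1 ≠ 0)
    (hroots : ∀ β : ℂ, β ≠ 1 → (D.map (algebraMap ℝ ℂ)).rootMultiplicity β < m) :
    Tendsto
      (fun k : ℕ =>
        (PowerSeries.coeff (R := ℝ) k
          ((N : PowerSeries ℝ) * (D : PowerSeries ℝ)⁻¹)) / (k : ℝ) ^ (m - 1))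
      atTop
      (nhds (N.eval 1 / ((Nat.factorial (m - 1) : ℝ) * ∏ i, (p i : ℝ)))) :=
  rational_generating_function_asymptotic_general m hm p hp N D hD hroots
end
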